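/- arXiv:2201.03129 — 7 statements merged into one kernel-verified Lean document; each statement's English description precedes it below -/
import Mathlib

section
/- For any commutative ring R, any n ≥ 1, vectors u, v ∈ R^n, and a formal power series f(t) = Σ_{M≥0} f_M t^M ∈ R[[t]], the determinant of the n×n matrix with (i,j) entry f(t·u_i·v_j) (as a formal power series in t) equals V(u)·V(v) · Σ_{M≥0} t^{M + C(n,2)} Σ_{m ⊢ M, m a partition with at most n parts} s_m(u)·s_m(v)·∏_{i=1}^n f_{m_i + n - i}, where V(u) = ∏_{i<j}(u_j − u_i) is the Vandermonde product and s_m is the Schur polynomial. -/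
open scoped Classical

/-!
Expanding the determinant multilinearly in its columns, the coefficient of `t ^ N` is
`∑ g, (∏ j, f_{g j} v_j ^ g j) * det (u_i ^ g j)` over the tuples `g : Fin n → ℕ` of sum `N`.
Tuples with a repeated entry give a repeated column, hence contribute nothing. An injective `g`
is uniquely `l ∘ σ` with `l` strictly decreasing and `σ` a permutation; the `u`-determinant only
changes by `sign σ`, so summing over `σ` assembles `det (v_j ^ l i)`. Finally the strictly
decreasing `l` are the shifted partitions `l i = m i + (n - 1 - i)`, and the shift raises the
degree by `∑ i, (n - 1 - i) = n.choose 2`.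
-/

open Finset Equiv PowerSeries

theorem PowerSeries.coeff_det {R ι : Type*} [CommRing R] [Fintype ι] [DecidableEq ι]
    (A : Matrix ι ι R⟦X⟧) (N : ℕ) :
    coeff N A.det = ∑ g ∈ piAntidiag univ N, (Matrix.of fun i j => coeff (g j) (A i j)).det := by
  simp only [Matrix.det_apply, map_sum, Units.smul_def, map_zsmul, coeff_prod, smul_sum,
    Matrix.of_apply]
  rw [sum_comm, finsuppAntidiag, sum_map, ← sum_attach (piAntidiag univ N)]
  rfl

theorem Matrix.det_of_pow_eq_zero_of_not_injective {R ι : Type*} [CommRing R] [Fintype ι]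
    [DecidableEq ι] (u : ι → R) {g : ι → ℕ} (hg : ¬ Function.Injective g) :
    (Matrix.of fun i j => u i ^ g j).det = 0 := by
  obtain ⟨a, b, hab, hne⟩ := Function.not_injective_iff.mp hg
  exact Matrix.det_zero_of_column_eq hne fun i => by simp [hab]

theorem Finset.sum_injective_eq_sum_strictAnti_sum_perm {α β : Type*} [LinearOrder α]
    [AddCommMonoid β] {n : ℕ} (s : Finset (Fin n → α))
    (hs : ∀ (g : Fin n → α) (σ : Perm (Fin n)), g ∈ s → g ∘ σ ∈ s) (F : (Fin n → α) → β) :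
    ∑ g ∈ s with Function.Injective g, F g =
      ∑ l ∈ s with StrictAnti l, ∑ σ : Perm (Fin n), F (l ∘ σ) := by
  rw [← sum_product']
  symm
  refine sum_bij (fun p _ => p.1 ∘ p.2) ?_ ?_ ?_ fun _ _ => rfl
  · rintro ⟨l, σ⟩ hp
    simp only [mem_product, mem_filter, mem_univ, and_true] at hp
    exact mem_filter.2 ⟨hs l σ hp.1, hp.2.injective.comp σ.injective⟩
  · rintro ⟨l, σ⟩ hp ⟨l', σ'⟩ hp' h
    simp only [mem_product, mem_filter, mem_univ, and_true] at hp hp' h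
    have hl : l = l' := by
      have hσ : (l ∘ σ) ∘ ⇑σ⁻¹ = l := by ext; simp
      have hσ' : (l ∘ σ) ∘ ⇑σ'⁻¹ = l' := by rw [h]; ext; simp
      have := Tuple.unique_antitone (f := l ∘ σ) (σ := σ⁻¹) (τ := σ'⁻¹)
        (by rw [hσ]; exact hp.2.antitone) (by rw [hσ']; exact hp'.2.antitone)
      rwa [hσ, hσ'] at this
    subst hl
    exact Prod.ext rfl (Equiv.ext fun i => hp.2.injective (congrFun h i))
  · intro g hg
    obtain ⟨hgs, hinj⟩ := mem_filter.1 hg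
    set ρ : Perm (Fin n) := Fin.revPerm.trans (Tuple.sort g)
    have hanti : StrictAnti (g ∘ ρ) :=
      ((Tuple.monotone_sort g).comp_antitone Fin.rev_anti).strictAnti_of_injective
        (hinj.comp ρ.injective)
    refine ⟨(g ∘ ρ, ρ⁻¹), ?_, ?_⟩
    · simp only [mem_product, mem_filter, mem_univ, and_true]
      exact ⟨hs g ρ hgs, hanti⟩
    · ext i; simp

section Khare

variable {R : Type*} [CommRing R]

theorem coeff_det_mk_mul_pow_eq_sum {ι : Type*} [Fintype ι] [DecidableEq ι] (u v : ι → R)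
    (fc : ℕ → R) (N : ℕ) :
    coeff N (Matrix.of fun i j => mk fun M => fc M * (u i * v j) ^ M).det =
      ∑ g ∈ piAntidiag univ N,
        (∏ j, fc (g j) * v j ^ g j) * (Matrix.of fun i j => u i ^ g j).det := by
  rw [PowerSeries.coeff_det]
  refine sum_congr rfl fun g _ => ?_
  rw [← Matrix.det_mul_row]
  congr 1
  ext i j
  simp only [Matrix.of_apply, coeff_mk]
  ring

theorem coeff_det_mk_mul_pow_eq_sum_strictAnti {n : ℕ} (u v : Fin n → R) (fc : ℕ → R)
    (N : ℕ) :
    coeff N (Matrix.of fun i j => mk fun M => fc M * (u i * v j) ^ M).det =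
      ∑ l ∈ piAntidiag univ N with StrictAnti l,
        (∏ i, fc (l i)) * (Matrix.of fun i j => u j ^ l i).det *
          (Matrix.of fun i j => v j ^ l i).det := by
  rw [coeff_det_mk_mul_pow_eq_sum, ← sum_filter_of_ne fun g _ h => not_not.1 fun hg => h (by
      rw [Matrix.det_of_pow_eq_zero_of_not_injective u hg, mul_zero]),
    sum_injective_eq_sum_strictAnti_sum_perm _ fun g σ hg => by
      simpa [Equiv.sum_comp] using hg]
  refine sum_congr rfl fun l _ => ?_
  have hu : (Matrix.of fun i j => u j ^ l i).det = (Matrix.of fun i j => u i ^ l j).det :=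
    Matrix.det_transpose _
  rw [hu, Matrix.det_apply (Matrix.of fun i j => v j ^ l i), mul_sum]
  refine sum_congr rfl fun σ _ => ?_
  have hperm : (Matrix.of fun i j => u i ^ l (σ j)).det =
      Perm.sign σ * (Matrix.of fun i j => u i ^ l j).det :=
    Matrix.det_permute' σ (Matrix.of fun i j => u i ^ l j)
  simp only [Function.comp_apply, hperm, Matrix.of_apply, Units.smul_def, zsmul_eq_mul,
    prod_mul_distrib, Equiv.prod_comp σ (fun i => fc (l i))]
  ring

end Khare

theorem StrictAnti.antitone_add_val {n : ℕ} {f : Fin n → ℕ} (hf : StrictAnti f) :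
    Antitone fun i => f i + i := by
  rw [antitone_iff_forall_covBy]
  intro a b hab
  have := hf hab.lt
  rw [Fin.covBy_iff, Nat.covBy_iff_add_one_eq] at hab
  omega

theorem StrictAnti.sub_one_sub_le {n : ℕ} {f : Fin n → ℕ} (hf : StrictAnti f) (i : Fin n) :
    n - 1 - i ≤ f i := by
  have hi := i.isLt
  have := hf.antitone_add_val (show i ≤ ⟨n - 1, by omega⟩ from Fin.le_def.2 (by simp; omega))
  simp only at this
  omega

theorem Fin.sum_sub_one_sub_val (n : ℕ) : ∑ i : Fin n, (n - 1 - (i : ℕ)) = n.choose 2 := by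
  rw [← Fintype.sum_equiv Fin.revPerm (fun i => (i : ℕ)) _ fun i => by simp; omega,
    Fin.sum_univ_eq_sum_range (fun i => i), sum_range_id, Nat.choose_two_right]

theorem StrictAnti.choose_two_le_sum {n : ℕ} {f : Fin n → ℕ} (hf : StrictAnti f) :
    n.choose 2 ≤ ∑ i, f i :=
  Fin.sum_sub_one_sub_val n ▸ sum_le_sum fun i _ => hf.sub_one_sub_le i

theorem sum_antitone_eq_sum_strictAnti {β : Type*} [AddCommMonoid β] (n M : ℕ)
    (F : (Fin n → ℕ) → β) :
    ∑ m : Fin n → Fin (M + 1),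
      (if Antitone (fun i => (m i : ℕ)) ∧ ∑ i, (m i : ℕ) = M then
        F fun i => m i + (n - 1 - i) else 0) =
      ∑ l ∈ piAntidiag univ (M + n.choose 2) with StrictAnti l, F l := by
  rw [← sum_filter]
  refine sum_bij (fun m _ i => m i + (n - 1 - i)) ?_ ?_ ?_ fun _ _ => rfl
  · intro m hm
    simp only [mem_filter, mem_univ, true_and] at hm
    simp only [mem_filter, mem_piAntidiag, mem_univ, ne_eq, implies_true, and_true,
      sum_add_distrib, Fin.sum_sub_one_sub_val, hm.2, true_and]
    intro i j hij
    have : (m j : ℕ) ≤ m i := hm.1 hij.le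
    have := j.isLt
    simp only [Fin.lt_def] at hij ⊢
    omega
  · intro m _ m' _ h
    funext i
    have := congrFun h i
    have := i.isLt
    exact Fin.ext (by omega)
  · intro l hl
    simp only [mem_filter, mem_piAntidiag, mem_univ, ne_eq, implies_true, and_true] at hl
    obtain ⟨hsum, hl⟩ := hl
    have hsub : ∑ i, (l i - (n - 1 - i)) = M := by
      rw [sum_tsub_distrib _ fun i _ => hl.sub_one_sub_le i, hsum, Fin.sum_sub_one_sub_val]
      omega
    have hle (i : Fin n) : l i - (n - 1 - i) ≤ M :=
      hsub ▸ single_le_sum (f := fun i : Fin n => l i - (n - 1 - i)) (by simp) (mem_univ i)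
    refine ⟨fun i => ⟨l i - (n - 1 - i), by have := hle i; omega⟩, ?_, ?_⟩
    · simp only [mem_filter, mem_univ, true_and]
      refine ⟨fun i j hij => ?_, hsub⟩
      have : l j + j ≤ l i + i := hl.antitone_add_val hij
      have := hl.sub_one_sub_le i
      have := hl.sub_one_sub_le j
      have := j.isLt
      simp only [Fin.le_def] at hij this ⊢
      omega
    · funext i
      have := hl.sub_one_sub_le i
      simp only
      omega

theorem stmt0_general (R : Type*) [CommRing R] (n : ℕ)
    (u v : Fin n → R) (fc : ℕ → R) :
    (∀ k : ℕ, k < n.choose 2 →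
      (PowerSeries.coeff (R := R) k)
        (Matrix.det (Matrix.of fun i j : Fin n =>
          PowerSeries.mk fun M => fc M * (u i * v j) ^ M)) = 0) ∧
    (∀ M : ℕ,
      (PowerSeries.coeff (R := R) (M + n.choose 2))
        (Matrix.det (Matrix.of fun i j : Fin n =>
          PowerSeries.mk fun M' => fc M' * (u i * v j) ^ M')) =
      ∑ m : Fin n → Fin (M + 1),
        if Antitone (fun i => (m i : ℕ)) ∧ (∑ i, (m i : ℕ)) = M then
          (∏ i : Fin n, fc ((m i : ℕ) + (n - 1 - (i : ℕ)))) *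
          Matrix.det (Matrix.of fun i j : Fin n => u j ^ ((m i : ℕ) + (n - 1 - (i : ℕ)))) *
          Matrix.det (Matrix.of fun i j : Fin n => v j ^ ((m i : ℕ) + (n - 1 - (i : ℕ))))
        else 0) := by
  refine ⟨fun k hk => ?_, fun M => ?_⟩
  · rw [coeff_det_mk_mul_pow_eq_sum_strictAnti]
    refine sum_eq_zero fun l hl => ?_
    simp only [mem_filter, mem_piAntidiag] at hl
    rw [← hl.1.1] at hk
    exact absurd hl.2.choose_two_le_sum (not_le.2 hk)
  · rw [coeff_det_mk_mul_pow_eq_sum_strictAnti, sum_antitone_eq_sum_strictAnti n M fun l =>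
      (∏ i, fc (l i)) * (Matrix.of fun i j => u j ^ l i).det *
        (Matrix.of fun i j => v j ^ l i).det]

/-- Khare's determinantal identity: for a formal power series `f(t) = ∑ f_M t^M` over a
commutative ring `R` and vectors `u, v ∈ R^n`,
`det f[t u vᵀ] = V(u) V(v) ∑_{M ≥ 0} t^{M + C(n,2)} ∑_{m ⊢ M} s_m(u) s_m(v) ∏_i f_{m_i + n - i}`,
stated coefficient-wise, with `V(u) s_m(u) = det (u_j^{m_i + n - i})` (Cauchy's definition
of the Schur polynomial), so each summand `V(u) V(v) s_m(u) s_m(v)` is the product of the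
two generalized Vandermonde determinants. -/
theorem stmt0 (R : Type*) [CommRing R] (n : ℕ) (hn : 1 ≤ n)
    (u v : Fin n → R) (fc : ℕ → R) :
    (∀ k : ℕ, k < n.choose 2 →
      (PowerSeries.coeff (R := R) k)
        (Matrix.det (Matrix.of fun i j : Fin n =>
          PowerSeries.mk fun M => fc M * (u i * v j) ^ M)) = 0) ∧
    (∀ M : ℕ,
      (PowerSeries.coeff (R := R) (M + n.choose 2))
        (Matrix.det (Matrix.of fun i j : Fin n =>
          PowerSeries.mk fun M' => fc M' * (u i * v j) ^ M')) =
      ∑ m : Fin n → Fin (M + 1),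
        if Antitone (fun i => (m i : ℕ)) ∧ (∑ i, (m i : ℕ)) = M then
          (∏ i : Fin n, fc ((m i : ℕ) + (n - 1 - (i : ℕ)))) *
          Matrix.det (Matrix.of fun i j : Fin n => u j ^ ((m i : ℕ) + (n - 1 - (i : ℕ)))) *
          Matrix.det (Matrix.of fun i j : Fin n => v j ^ ((m i : ℕ) + (n - 1 - (i : ℕ))))
        else 0) :=
  stmt0_general R n u v fc
end

section
/- For n ≥ 1, commuting variables u_1,...,u_n, v_1,...,v_n, and a formal power series f(t) = Σ f_M t^M, the permanent of the n×n matrix (f(t·u_i·v_j)) equals (1/n!) Σ_{m ∈ Z_{≥0}^n} t^{|m|} (∏_i f_{m_i}) · perm(u_j^{m_i})_{i,j} · perm(v_j^{m_i})_{i,j}. -/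
/-!
Expanding the product, the coefficient of `t^k` in `∏ᵢ f(t uᵢ v_{σ i})` is
`∑_{|m| = k} ∏ᵢ f_{mᵢ} uᵢ^{mᵢ} v_{σ i}^{mᵢ}`. On the other side, multiplying out the two
permanents gives a double sum over `σ, τ`. The weight `∏ᵢ f_{mᵢ}` and the constraint `|m| = k`
are symmetric in `m`, so the substitution `m ↦ m ∘ σ⁻¹` turns the `(σ, τ)` term into the
`(1, τ σ⁻¹)` term, and each permutation `π = τ σ⁻¹` occurs `n!` times.
-/

open Finset Equiv

theorem Finset.sum_piAntidiag_univ_eq_sum_fin {ι M : Type*} [Fintype ι] [DecidableEq ι]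
    [AddCommMonoid M] (F : (ι → ℕ) → M) (k : ℕ) :
    ∑ l ∈ piAntidiag univ k, F l =
      ∑ m : ι → Fin (k + 1), if ∑ i, (m i : ℕ) = k then F (fun i => m i) else 0 := by
  have hlt : ∀ l ∈ piAntidiag (univ : Finset ι) k, ∀ i, l i < k + 1 := fun l hl i =>
    Nat.lt_succ_of_le ((single_le_sum (fun j _ => Nat.zero_le (l j)) (mem_univ i)).trans
      (mem_piAntidiag.1 hl).1.le)
  rw [← sum_filter]
  symm
  refine sum_nbij' (fun m i => m i) (fun l i => Fin.ofNat (k + 1) (l i)) ?_ ?_ ?_ ?_ ?_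
  · intro m hm
    simpa using hm
  · intro l hl
    simp [Nat.mod_eq_of_lt (hlt l hl _), (mem_piAntidiag.1 hl).1]
  · intro m _
    ext i
    simp
  · intro l hl
    ext i
    simp [Nat.mod_eq_of_lt (hlt l hl i)]
  · exact fun _ _ => rfl

theorem PowerSeries.coeff_prod_univ_eq_sum_fin {ι R : Type*} [Fintype ι] [DecidableEq ι]
    [CommSemiring R] (f : ι → PowerSeries R) (k : ℕ) :
    coeff k (∏ i, f i) =
      ∑ m : ι → Fin (k + 1), if ∑ i, (m i : ℕ) = k then ∏ i, coeff (m i) (f i) else 0 := by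
  rw [coeff_prod, finsuppAntidiag, sum_map]
  exact (sum_attach _ _).trans (sum_piAntidiag_univ_eq_sum_fin (fun l => ∏ i, coeff (l i) (f i)) k)

theorem Equiv.Perm.sum_sum_mul_inv {ι M : Type*} [Fintype ι] [DecidableEq ι]
    [AddCommMonoid M] (G : Perm ι → M) :
    ∑ σ : Perm ι, ∑ τ : Perm ι, G (τ * σ⁻¹) = (Fintype.card ι).factorial • ∑ π, G π := by
  have h : ∀ σ : Perm ι, ∑ τ, G (τ * σ⁻¹) = ∑ π, G π := fun σ =>
    Equiv.sum_comp (Equiv.mulRight σ⁻¹) G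
  rw [sum_congr rfl fun σ _ => h σ, sum_const, card_univ, Fintype.card_perm]

section SymmetricWeight

variable {ι α R : Type*} [Fintype ι] [DecidableEq ι] [Fintype α] [CommSemiring R]
  (w : (ι → α) → R) (hw : ∀ (σ : Perm ι) m, w (m ∘ σ) = w m)
include hw

theorem sum_mul_prod_comp_perm (g : ι → α → R) (σ : Perm ι) :
    ∑ m, w m * ∏ i, g (σ i) (m i) = ∑ m, w m * ∏ i, g i (m i) := by
  symm
  refine Fintype.sum_equiv (σ.symm.arrowCongr (Equiv.refl α)) _ _ fun m => ?_
  show _ = w (m ∘ σ) * ∏ i, g (σ i) (m (σ i))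
  rw [hw, Equiv.prod_comp σ fun i => g i (m i)]

theorem sum_mul_permanent_mul_permanent (a b : ι → α → R) :
    ∑ m, w m * (Matrix.of fun j i => a j (m i)).permanent *
        (Matrix.of fun j i => b j (m i)).permanent =
      (Fintype.card ι).factorial • ∑ π : Perm ι, ∑ m, w m * ∏ i, a i (m i) * b (π i) (m i) := by
  calc _ = ∑ σ : Perm ι, ∑ τ : Perm ι, ∑ m, w m * ∏ i, a (σ i) (m i) * b (τ i) (m i) := by
        simp_rw [Matrix.permanent, Matrix.of_apply, mul_assoc, sum_mul_sum, mul_sum,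
          ← prod_mul_distrib]
        rw [sum_comm]
        exact sum_congr rfl fun σ _ => sum_comm
    _ = ∑ σ : Perm ι, ∑ τ : Perm ι, ∑ m, w m * ∏ i, a i (m i) * b ((τ * σ⁻¹) i) (m i) := by
        refine sum_congr rfl fun σ _ => sum_congr rfl fun τ _ => ?_
        simpa using sum_mul_prod_comp_perm w hw (fun j x => a j x * b ((τ * σ⁻¹) j) x) σ
    _ = _ := Perm.sum_sum_mul_inv fun π => ∑ m, w m * ∏ i, a i (m i) * b (π i) (m i)

end SymmetricWeight

theorem stmt1_general (R : Type*) [CommRing R] [Algebra ℚ R] (n : ℕ)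
    (u v : Fin n → R) (fc : ℕ → R) (k : ℕ) :
    (PowerSeries.coeff (R := R) k)
      (∑ σ : Equiv.Perm (Fin n), ∏ i : Fin n,
        PowerSeries.mk fun M => fc M * (u i * v (σ i)) ^ M) =
    ((n.factorial : ℚ)⁻¹) •
      ∑ m : Fin n → Fin (k + 1),
        if (∑ i, (m i : ℕ)) = k then
          (∏ i : Fin n, fc (m i)) *
          (∑ σ : Equiv.Perm (Fin n), ∏ i : Fin n, u (σ i) ^ (m i : ℕ)) *
          (∑ σ : Equiv.Perm (Fin n), ∏ i : Fin n, v (σ i) ^ (m i : ℕ))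
        else 0 := by
  set w : (Fin n → Fin (k + 1)) → R :=
    fun m => if ∑ i, (m i : ℕ) = k then ∏ i, fc (m i) else 0
  have hw : ∀ (σ : Perm (Fin n)) m, w (m ∘ σ) = w m := fun σ m => by
    simp only [w, Function.comp_apply, Equiv.sum_comp σ fun i => (m i : ℕ),
      Equiv.prod_comp σ fun i => fc (m i)]
  have hcoeff : PowerSeries.coeff k (∑ σ : Perm (Fin n), ∏ i : Fin n,
        PowerSeries.mk fun M => fc M * (u i * v (σ i)) ^ M) =
      ∑ π : Perm (Fin n), ∑ m, w m * ∏ i, u i ^ (m i : ℕ) * v (π i) ^ (m i : ℕ) := by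
    rw [map_sum]
    refine sum_congr rfl fun π _ => ?_
    rw [PowerSeries.coeff_prod_univ_eq_sum_fin]
    refine sum_congr rfl fun m _ => ?_
    split_ifs <;> simp [w, *, mul_pow, prod_mul_distrib]
  have hsummand : ∀ m : Fin n → Fin (k + 1), (if ∑ i, (m i : ℕ) = k then
        (∏ i, fc (m i)) * (∑ σ : Perm (Fin n), ∏ i, u (σ i) ^ (m i : ℕ)) *
          (∑ σ : Perm (Fin n), ∏ i, v (σ i) ^ (m i : ℕ)) else 0) =
      w m * (Matrix.of fun j i => u j ^ (m i : ℕ)).permanent *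
        (Matrix.of fun j i => v j ^ (m i : ℕ)).permanent := fun m => by
    split_ifs <;> simp [w, Matrix.permanent, *]
  rw [hcoeff, sum_congr rfl fun m _ => hsummand m,
    sum_mul_permanent_mul_permanent w hw (fun j x => u j ^ (x : ℕ)) (fun j x => v j ^ (x : ℕ)),
    Fintype.card_fin, ← Nat.cast_smul_eq_nsmul ℚ, smul_smul,
    inv_mul_cancel₀ (by positivity), one_smul]

/-- Permanent identity (bosonic): for a power series `f(t) = ∑ f_M t^M` over a
commutative ℚ-algebra and vectors `u, v`,
`perm f[t u vᵀ] = (1/n!) ∑_{m ∈ ℤ_{≥0}^n} t^{|m|} (∏_i f_{m_i}) perm(u_j^{m_i}) perm(v_j^{m_i})`,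
stated coefficient-wise in `t`; the permanent is the Leibniz sum without signs. -/
theorem stmt1 (R : Type*) [CommRing R] [Algebra ℚ R] (n : ℕ) (hn : 1 ≤ n)
    (u v : Fin n → R) (fc : ℕ → R) (k : ℕ) :
    (PowerSeries.coeff (R := R) k)
      (∑ σ : Equiv.Perm (Fin n), ∏ i : Fin n,
        PowerSeries.mk fun M => fc M * (u i * v (σ i)) ^ M) =
    ((n.factorial : ℚ)⁻¹) •
      ∑ m : Fin n → Fin (k + 1),
        if (∑ i, (m i : ℕ)) = k then
          (∏ i : Fin n, fc (m i)) *
          (∑ σ : Equiv.Perm (Fin n), ∏ i : Fin n, u (σ i) ^ (m i : ℕ)) *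
          (∑ σ : Equiv.Perm (Fin n), ∏ i : Fin n, v (σ i) ^ (m i : ℕ))
        else 0 :=
  stmt1_general R n u v fc k
end

section
/- For n ≥ 1 and commuting variables u_i, v_j, the permanent of the n×n matrix (f(t u_i v_j)) equals Σ over non-increasing tuples m ∈ Z_{≥0}^n of t^{|m|} · |Stab_{S_n}(m)| · (∏_i f_{m_i}) · m_m(u) · m_m(v), where m_m denotes the monomial symmetric polynomial and Stab_{S_n}(m) is the stabilizer of m under the permutation action of S_n on coordinates. This identity holds over an arbitrary commutative ring. -/
open scoped Classical

/-!
Expanding each factor `f(t uᵢ v_{σ(i)})`, the coefficient of `t^k` in the permanent is a sum over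
exponent tuples `m` with `|m| = k` and permutations `σ` of `(∏ f_{mᵢ}) u^m v^{m ∘ σ}`. Grouping the
tuples `m` by their non-increasing rearrangement splits this sum into `S_n`-orbits; on the orbit of
an antitone `m` the factor `∏ f_{mᵢ}` is constant, the orbit sum of `u^w` is `m_m(u)`, and
`∑_σ v^{m ∘ σ}` runs `|Stab(m)|` times through the orbit of `m`, giving `|Stab(m)| m_m(v)`.
-/

open Finset

section OrbitSum

variable {ι α M : Type*} [Fintype ι] [DecidableEq ι]

theorem sum_perm_comp_perm_comp [AddCommMonoid M] (m : ι → α) (τ : Equiv.Perm ι)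
    (F : (ι → α) → M) :
    ∑ σ : Equiv.Perm ι, F ((m ∘ τ) ∘ σ) = ∑ σ : Equiv.Perm ι, F (m ∘ σ) :=
  Equiv.sum_comp (Equiv.mulLeft τ) (fun σ => F (m ∘ σ))

variable [DecidableEq α]

theorem card_filter_comp_perm_eq_card_stabilizer (m : ι → α) (τ : Equiv.Perm ι) :
    #{σ : Equiv.Perm ι | m ∘ σ = m ∘ τ} = #{σ : Equiv.Perm ι | ∀ i, m (σ i) = m i} := by
  refine card_bij' (fun σ _ => σ * τ⁻¹) (fun σ _ => σ * τ) ?_ ?_ (by simp) (by simp)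
  · intro σ hσ
    simp only [mem_filter, mem_univ, true_and] at hσ ⊢
    intro i
    simpa using congrFun hσ (τ⁻¹ i)
  · intro σ hσ
    simp only [mem_filter, mem_univ, true_and] at hσ ⊢
    funext i
    exact hσ (τ i)

theorem sum_perm_comp_eq_card_stabilizer_smul_sum_orbit [AddCommMonoid M] (m : ι → α)
    (F : (ι → α) → M) :
    ∑ σ : Equiv.Perm ι, F (m ∘ σ) =
      #{σ : Equiv.Perm ι | ∀ i, m (σ i) = m i} •
        ∑ w ∈ univ.image (fun σ : Equiv.Perm ι => m ∘ σ), F w := by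
  rw [sum_comp, smul_sum]
  refine sum_congr rfl fun w hw => ?_
  obtain ⟨τ, -, rfl⟩ := mem_image.1 hw
  rw [card_filter_comp_perm_eq_card_stabilizer]

theorem sum_orbit_mul_sum_perm_comp [CommSemiring M] (m : ι → α) (c U V : (ι → α) → M)
    (hc : ∀ σ : Equiv.Perm ι, c (m ∘ σ) = c m) :
    ∑ w ∈ univ.image (fun σ : Equiv.Perm ι => m ∘ σ),
        c w * U w * ∑ σ : Equiv.Perm ι, V (w ∘ σ) =
      c m * #{σ : Equiv.Perm ι | ∀ i, m (σ i) = m i} *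
        (∑ w ∈ univ.image (fun σ : Equiv.Perm ι => m ∘ σ), U w) *
        ∑ w ∈ univ.image (fun σ : Equiv.Perm ι => m ∘ σ), V w := by
  have hterm : ∀ w ∈ univ.image (fun σ : Equiv.Perm ι => m ∘ σ),
      c w * U w * ∑ σ : Equiv.Perm ι, V (w ∘ σ) =
        c m * (#{σ : Equiv.Perm ι | ∀ i, m (σ i) = m i} *
          ∑ w ∈ univ.image (fun σ : Equiv.Perm ι => m ∘ σ), V w) * U w := by
    intro w hw
    obtain ⟨τ, -, rfl⟩ := mem_image.1 hw
    rw [hc, sum_perm_comp_perm_comp, sum_perm_comp_eq_card_stabilizer_smul_sum_orbit,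
      nsmul_eq_mul, mul_right_comm]
  rw [sum_congr rfl hterm, ← mul_sum]
  ring

end OrbitSum

section AntitoneSort

variable {n : ℕ} {α M : Type*} [LinearOrder α] [AddCommMonoid M]

def antitoneSortPerm (m : Fin n → α) : Equiv.Perm (Fin n) :=
  Tuple.sort (OrderDual.toDual ∘ m)

theorem antitone_comp_antitoneSortPerm (m : Fin n → α) : Antitone (m ∘ antitoneSortPerm m) :=
  monotone_toDual_comp_iff.1 (Tuple.monotone_sort _)

theorem sum_eq_sum_antitone_sum_orbit [Fintype α] (F : (Fin n → α) → M) :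
    ∑ m, F m =
      ∑ m with Antitone m, ∑ w ∈ univ.image (fun σ : Equiv.Perm (Fin n) => m ∘ σ), F w := by
  rw [← sum_fiberwise_of_maps_to (g := fun m => m ∘ antitoneSortPerm m) (t := {m | Antitone m})
    (fun m _ => by simpa using antitone_comp_antitoneSortPerm m)]
  refine sum_congr rfl fun m₀ hm₀ => ?_
  congr 1
  ext m
  simp only [mem_filter, mem_univ, true_and, mem_image]
  constructor
  · rintro rfl
    exact ⟨(antitoneSortPerm m)⁻¹, by ext; simp⟩
  · rintro ⟨σ, rfl⟩
    have hm₀ : Antitone (m₀ ∘ (1 : Equiv.Perm (Fin n))) := by simpa using hm₀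
    exact Tuple.unique_antitone (σ := σ * antitoneSortPerm (m₀ ∘ σ)) (τ := 1)
      (antitone_comp_antitoneSortPerm (m₀ ∘ σ)) hm₀

end AntitoneSort

section PermanentExpansion

variable {ι R : Type*} [Fintype ι] [DecidableEq ι] [CommSemiring R]

theorem PowerSeries.coeff_prod_mk (a : ι → ℕ → R) (k : ℕ) :
    coeff k (∏ i, mk (a i)) =
      ∑ m : ι → Fin (k + 1) with ∑ i, (m i : ℕ) = k, ∏ i, a i (m i) := by
  rw [coeff_prod]
  refine sum_bij' (fun l hl i => ⟨l i, Nat.lt_succ_of_le ?_⟩)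
    (fun m _ => Finsupp.equivFunOnFinite.symm fun i => (m i : ℕ)) ?_ ?_ ?_ ?_ ?_
  · exact (single_le_sum (fun j _ => Nat.zero_le (l j)) (mem_univ i)).trans_eq
      (mem_finsuppAntidiag.1 hl).1
  · intro l hl
    simpa using (mem_finsuppAntidiag.1 hl).1
  · intro m hm
    simpa [mem_finsuppAntidiag] using hm
  · intro l hl
    ext i
    simp
  · intro m hm
    ext i
    simp
  · intro l hl
    simp

theorem sum_perm_prod_pow_comp (v : ι → R) (m : ι → ℕ) :
    ∑ σ : Equiv.Perm ι, ∏ i, v (σ i) ^ m i = ∑ σ : Equiv.Perm ι, ∏ i, v i ^ m (σ i) :=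
  Fintype.sum_equiv (Equiv.inv _) _ _ fun σ => by
    simpa using Equiv.prod_comp σ fun j => v j ^ m (σ⁻¹ j)

theorem coeff_sum_perm_prod_mk (u v : ι → R) (f : ℕ → R) (k : ℕ) :
    PowerSeries.coeff k
        (∑ σ : Equiv.Perm ι, ∏ i, PowerSeries.mk fun M => f M * (u i * v (σ i)) ^ M) =
      ∑ m : ι → Fin (k + 1),
        (if ∑ i, (m i : ℕ) = k then ∏ i, f (m i) else 0) * (∏ i, u i ^ (m i : ℕ)) *
          ∑ σ : Equiv.Perm ι, ∏ i, v i ^ (m (σ i) : ℕ) := by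
  simp_rw [map_sum, PowerSeries.coeff_prod_mk, sum_filter]
  rw [sum_comm]
  refine sum_congr rfl fun m _ => ?_
  split_ifs
  · simp only [mul_pow, prod_mul_distrib, ← mul_sum, sum_perm_prod_pow_comp, mul_assoc]
  · simp

end PermanentExpansion

theorem stmt2_general (R : Type*) [CommRing R] (n : ℕ)
    (u v : Fin n → R) (fc : ℕ → R) (k : ℕ) :
    (PowerSeries.coeff k)
      (∑ σ : Equiv.Perm (Fin n), ∏ i : Fin n,
        PowerSeries.mk fun M => fc M * (u i * v (σ i)) ^ M) =
    ∑ m : Fin n → Fin (k + 1),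
      if Antitone (fun i => (m i : ℕ)) ∧ (∑ i, (m i : ℕ)) = k then
        (((Finset.univ.filter (fun σ : Equiv.Perm (Fin n) => ∀ i, m (σ i) = m i)).card : R)) *
        (∏ i : Fin n, fc (m i)) *
        (∑ w ∈ Finset.image (fun σ : Equiv.Perm (Fin n) => m ∘ σ) Finset.univ,
          ∏ i : Fin n, u i ^ (w i : ℕ)) *
        (∑ w ∈ Finset.image (fun σ : Equiv.Perm (Fin n) => m ∘ σ) Finset.univ,
          ∏ i : Fin n, v i ^ (w i : ℕ))
      else 0 := by
  set c : (Fin n → Fin (k + 1)) → R := fun m => if ∑ i, (m i : ℕ) = k then ∏ i, fc (m i) else 0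
  set U : (Fin n → Fin (k + 1)) → R := fun w => ∏ i, u i ^ (w i : ℕ)
  set V : (Fin n → Fin (k + 1)) → R := fun w => ∏ i, v i ^ (w i : ℕ)
  have hc : ∀ (m : Fin n → Fin (k + 1)) (τ : Equiv.Perm (Fin n)), c (m ∘ τ) = c m := fun m τ => by
    simp only [c, Function.comp_apply, Equiv.sum_comp τ (fun i => (m i : ℕ)),
      Equiv.prod_comp τ (fun i => fc (m i))]
  calc _ = ∑ m, c m * U m * ∑ σ : Equiv.Perm (Fin n), V (m ∘ σ) :=
        coeff_sum_perm_prod_mk u v fc k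
    _ = ∑ m with Antitone m, ∑ w ∈ univ.image (fun σ : Equiv.Perm (Fin n) => m ∘ σ),
          c w * U w * ∑ σ : Equiv.Perm (Fin n), V (w ∘ σ) := sum_eq_sum_antitone_sum_orbit _
    _ = ∑ m with Antitone m, c m * #{σ : Equiv.Perm (Fin n) | ∀ i, m (σ i) = m i} *
          (∑ w ∈ univ.image (fun σ : Equiv.Perm (Fin n) => m ∘ σ), U w) *
          ∑ w ∈ univ.image (fun σ : Equiv.Perm (Fin n) => m ∘ σ), V w :=
        -- the two stabilizer filters differ only in their `Decidable` instances
        sum_congr rfl fun m _ => by convert sum_orbit_mul_sum_perm_comp m c U V (hc m)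
    _ = _ := by
        rw [sum_filter]
        refine sum_congr rfl fun m _ => ?_
        have hanti : Antitone (fun i => (m i : ℕ)) ↔ Antitone m := Iff.rfl
        simp only [c, hanti, ite_and]
        split_ifs <;> ring

/-- Permanent identity (bosonic, over an arbitrary commutative ring):
`perm f[t u vᵀ] = ∑_{m non-increasing} t^{|m|} |Stab_{S_n}(m)| (∏_i f_{m_i}) m_m(u) m_m(v)`,
stated coefficient-wise in `t`. The monomial symmetric polynomial `m_m(u)` is the sum
of the distinct monomials `u^{w}` as `w` ranges over the `S_n`-orbit of `m`. -/
theorem stmt2 (R : Type*) [CommRing R] (n : ℕ) (hn : 1 ≤ n)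
    (u v : Fin n → R) (fc : ℕ → R) (k : ℕ) :
    (PowerSeries.coeff k)
      (∑ σ : Equiv.Perm (Fin n), ∏ i : Fin n,
        PowerSeries.mk fun M => fc M * (u i * v (σ i)) ^ M) =
    ∑ m : Fin n → Fin (k + 1),
      if Antitone (fun i => (m i : ℕ)) ∧ (∑ i, (m i : ℕ)) = k then
        (((Finset.univ.filter (fun σ : Equiv.Perm (Fin n) => ∀ i, m (σ i) = m i)).card : R)) *
        (∏ i : Fin n, fc (m i)) *
        (∑ w ∈ Finset.image (fun σ : Equiv.Perm (Fin n) => m ∘ σ) Finset.univ,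
          ∏ i : Fin n, u i ^ (w i : ℕ)) *
        (∑ w ∈ Finset.image (fun σ : Equiv.Perm (Fin n) => m ∘ σ) Finset.univ,
          ∏ i : Fin n, v i ^ (w i : ℕ))
      else 0 :=
  stmt2_general R n u v fc k
end

section
/- Let G be a finite subgroup of S_n, χ an irreducible complex character of G, and e_χ(u), e_χ̄(v) the idempotents (χ(1)/|G|)Σ_{g∈G} χ(g) g^{-1} acting by permuting the variables u_1,...,u_n and v_1,...,v_n respectively. Then for any formal power series f(t) = Σ f_M t^M, applying e_χ in the u-variables to the product ∏_{i=1}^n f(t u_i v_i) gives the same result as applying e_χ̄ in the v-variables, and both equal Σ_{m ∈ Z_{≥0}^n} t^{|m|} (∏_i f_{m_i}) · (e_χ(u)(u^m)) · (e_χ̄(v)(v^m)). -/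
/-!
Both operators are averages of algebra automorphisms permuting one block of variables, so
`e_χ(u)` commutes with multiplication by polynomials in the `v`'s and `e_χ̄(v)` with
multiplication by polynomials in the `u`'s; hence `e_χ(u)(u^m) · e_χ̄(v)(v^m) =
e_χ(u) e_χ̄(v) (u^m v^m)`. Each coefficient of `∏ f(t uᵢ vᵢ)` is invariant under permuting the
`u`'s and the `v`'s simultaneously, so on it `σ` acting on the `u`'s agrees with `σ⁻¹` acting on
the `v`'s; since `χ(g⁻¹) = conj χ(g)` (the eigenvalues of `V(g)` are roots of unity), this turns
`e_χ(u)` into `e_χ̄(v)`. The expansion then follows from `e_χ(u) e_χ̄(v) = e_χ(u)² = e_χ(u)`.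
Idempotence of `e_χ` in any representation amounts to `∑_h χ(h) χ(h⁻¹x) = (|G|/χ(1)) χ(x)`,
which is a trace computation once Schur's lemma makes `∑_h χ(h) V(h⁻¹)` a scalar on `V`.
-/

namespace Module.End

variable {K V : Type*} [Field K] [AddCommGroup V] [Module K V]

lemma isSemisimple_of_pow_eq_one {f : End K V} {N : ℕ} (hN : (N : K) ≠ 0) (h : f ^ N = 1) :
    f.IsSemisimple :=
  isSemisimple_of_squarefree_aeval_eq_zero
    (Polynomial.X_pow_sub_one_separable_iff.mpr hN).squarefree (by simp [h])

lemma trace_eq_sum_finrank_eigenspace [FiniteDimensional K V] {f : End K V}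
    (hf : ⨆ μ, f.eigenspace μ = ⊤) {g : End K V} (a : K → K)
    (hg : ∀ μ, ∀ v ∈ f.eigenspace μ, g v = a μ • v) :
    LinearMap.trace K V g =
      ∑ μ ∈ f.finite_hasEigenvalue.toFinset, a μ * finrank K (f.eigenspace μ) := by
  classical
  have hint := DirectSum.isInternal_submodule_of_iSupIndep_of_iSup_eq_top
    f.eigenspaces_iSupIndep hf
  have hmaps : ∀ μ, Set.MapsTo g (f.eigenspace μ) (f.eigenspace μ) := fun μ v hv => by
    rw [SetLike.mem_coe, hg μ v hv]
    exact Submodule.smul_mem _ _ hv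
  rw [LinearMap.trace_eq_sum_trace_restrict' hint f.finite_hasEigenvalue hmaps]
  refine Finset.sum_congr rfl fun μ _ => ?_
  have : g.restrict (hmaps μ) = a μ • LinearMap.id := by
    ext v
    exact hg μ v v.2
  rw [this, map_smul, LinearMap.trace_id, smul_eq_mul]

end Module.End

namespace FDRep

variable {G : Type*} [Group G] [Fintype G]

lemma char_inv (V : FDRep ℂ G) (g : G) :
    V.character g⁻¹ = starRingEnd ℂ (V.character g) := by
  set f : Module.End ℂ V := V.ρ g
  have hfN : f ^ orderOf g = 1 := by rw [← map_pow, pow_orderOf_eq_one, map_one]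
  have hN : orderOf g ≠ 0 := (orderOf_pos g).ne'
  have hf : ⨆ μ, f.eigenspace μ = ⊤ :=
    (Module.End.isSemisimple_of_pow_eq_one (by exact_mod_cast hN) hfN).iSup_eigenspace_eq_top
  have hinv : ∀ μ, ∀ v ∈ f.eigenspace μ, V.ρ g⁻¹ v = μ⁻¹ • v := by
    intro μ v hv
    rw [Module.End.mem_eigenspace_iff] at hv
    have : v = μ • V.ρ g⁻¹ v := by
      rw [← map_smul, ← hv, ← Module.End.mul_apply, ← map_mul, inv_mul_cancel, map_one,
        Module.End.one_apply]
    by_cases hμ : μ = 0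
    · rw [this, hμ, zero_smul, map_zero, smul_zero]
    · rw [this, smul_smul, inv_mul_cancel₀ hμ, one_smul, ← this]
  have hconj : ∀ μ ∈ f.finite_hasEigenvalue.toFinset, μ⁻¹ = starRingEnd ℂ μ := by
    intro μ hμ
    obtain ⟨v, hv⟩ := (Set.Finite.mem_toFinset _).mp hμ |>.exists_hasEigenvector
    have hμN : μ ^ orderOf g = 1 := by
      have := hv.pow_apply (orderOf g)
      rw [hfN, Module.End.one_apply] at this
      exact (smul_left_injective ℂ hv.2 (this.symm.trans (one_smul ℂ v).symm))
    exact Complex.inv_eq_conj (Complex.norm_eq_one_of_pow_eq_one hμN hN)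
  change LinearMap.trace ℂ V (V.ρ g⁻¹) = starRingEnd ℂ (LinearMap.trace ℂ V f)
  rw [Module.End.trace_eq_sum_finrank_eigenspace hf _ hinv,
    Module.End.trace_eq_sum_finrank_eigenspace (g := f) hf id
      fun _ _ => Module.End.mem_eigenspace_iff.mp, map_sum]
  refine Finset.sum_congr rfl fun μ hμ => ?_
  simp [hconj μ hμ]

lemma sum_char_mul_char_inv (V : FDRep ℂ G) [CategoryTheory.Simple V] :
    ∑ g : G, V.character g * V.character g⁻¹ = Fintype.card G := by
  have h := char_orthonormal V V
  rw [if_pos ⟨CategoryTheory.Iso.refl V⟩, Nat.card_eq_fintype_card,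
    inv_mul_eq_one₀ (by simp)] at h
  exact h.symm

lemma sum_char_smul_ρ_inv_commute (V : FDRep ℂ G) (g : G) :
    V.ρ g * ∑ h : G, V.character h • V.ρ h⁻¹ = (∑ h : G, V.character h • V.ρ h⁻¹) * V.ρ g := by
  simp only [Finset.mul_sum, Finset.sum_mul, mul_smul_comm, smul_mul_assoc, ← map_mul]
  refine Fintype.sum_equiv (MulAut.conj g).toEquiv _ _ fun h => ?_
  simp only [MulEquiv.toEquiv_eq_coe, MulEquiv.coe_toEquiv, MulAut.conj_apply, mul_inv_rev,
    inv_inv, mul_assoc]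
  rw [inv_mul_cancel, mul_one, ← mul_assoc, char_conj]

lemma exists_sum_char_smul_ρ_inv_eq_smul_one (V : FDRep ℂ G) [CategoryTheory.Simple V] :
    ∃ c : ℂ, ∑ h : G, V.character h • V.ρ h⁻¹ = c • 1 := by
  let T : V ⟶ V := Action.Hom.mk (FGModuleCat.ofHom (∑ h : G, V.character h • V.ρ h⁻¹))
    fun g => by ext v; exact (LinearMap.congr_fun (sum_char_smul_ρ_inv_commute V g) v).symm
  obtain ⟨c, hc⟩ := CategoryTheory.endomorphism_simple_eq_smul_id ℂ T
  exact ⟨c, (congrArg (fun T : V ⟶ V => T.hom.hom.hom) hc).symm⟩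

lemma trace_sum_char_smul_ρ_inv_mul (V : FDRep ℂ G) (x : G) :
    LinearMap.trace ℂ V ((∑ h : G, V.character h • V.ρ h⁻¹) * V.ρ x) =
      ∑ h : G, V.character h * V.character (h⁻¹ * x) := by
  simp only [Finset.sum_mul, smul_mul_assoc, ← map_mul, map_sum, map_smul, smul_eq_mul]
  rfl

lemma char_one_ne_zero (V : FDRep ℂ G) [CategoryTheory.Simple V] : V.character 1 ≠ 0 := by
  obtain ⟨c, hc⟩ := exists_sum_char_smul_ρ_inv_eq_smul_one V
  have h := trace_sum_char_smul_ρ_inv_mul V 1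
  simp only [hc, map_one, mul_one, map_smul, LinearMap.trace_one, smul_eq_mul,
    sum_char_mul_char_inv] at h
  rw [char_one]
  intro h0
  rw [h0, mul_zero] at h
  exact Fintype.card_ne_zero (by exact_mod_cast h.symm)

lemma sum_char_mul_char_inv_mul (V : FDRep ℂ G) [CategoryTheory.Simple V] (x : G) :
    ∑ h : G, V.character h * V.character (h⁻¹ * x) =
      Fintype.card G / V.character 1 * V.character x := by
  obtain ⟨c, hc⟩ := exists_sum_char_smul_ρ_inv_eq_smul_one V
  have hc1 := trace_sum_char_smul_ρ_inv_mul V 1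
  rw [← trace_sum_char_smul_ρ_inv_mul, hc]
  simp only [hc, map_one, mul_one, smul_mul_assoc, one_mul, map_smul, LinearMap.trace_one,
    smul_eq_mul, sum_char_mul_char_inv] at hc1 ⊢
  rw [← hc1, ← char_one, mul_div_cancel_right₀ _ (char_one_ne_zero V)]
  rfl

end FDRep

namespace Representation

variable {G M : Type*} [Group G] [Fintype G] [AddCommMonoid M] [Module ℂ M]

/-- The idempotent `e_χ` acting through `ρ`. -/
noncomputable def charProj (ρ : Representation ℂ G M) (χ : G → ℂ) : Module.End ℂ M :=
  (χ 1 / Fintype.card G) • ∑ g : G, χ g • ρ g⁻¹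

lemma charProj_apply (ρ : Representation ℂ G M) (χ : G → ℂ) (x : M) :
    ρ.charProj χ x = (χ 1 / Fintype.card G) • ∑ g : G, χ g • ρ g⁻¹ x := by
  simp [charProj]

lemma sum_smul_mul_sum_smul (ρ : Representation ℂ G M) (a b : G → ℂ) :
    (∑ g : G, a g • ρ g⁻¹) * (∑ g : G, b g • ρ g⁻¹) =
      ∑ x : G, (∑ h : G, b h * a (h⁻¹ * x)) • ρ x⁻¹ := by
  calc _ = ∑ h : G, ∑ g : G, (b h * a g) • ρ (h * g)⁻¹ := by
        rw [Finset.sum_mul_sum, Finset.sum_comm]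
        simp only [smul_mul_smul_comm, ← map_mul, mul_inv_rev, mul_comm (a _)]
    _ = ∑ h : G, ∑ x : G, (b h * a (h⁻¹ * x)) • ρ x⁻¹ := by
        refine Finset.sum_congr rfl fun h _ => Fintype.sum_equiv (Equiv.mulLeft h) _ _ ?_
        simp
    _ = _ := by
        rw [Finset.sum_comm]
        simp only [Finset.sum_smul]

lemma charProj_mul_self (ρ : Representation ℂ G M) (V : FDRep ℂ G) [CategoryTheory.Simple V] :
    ρ.charProj V.character * ρ.charProj V.character = ρ.charProj V.character := by
  have hcard : (Fintype.card G : ℂ) ≠ 0 := Nat.cast_ne_zero.mpr Fintype.card_ne_zero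
  have hχ1 := FDRep.char_one_ne_zero V
  have hS : ∑ x : G, (∑ h : G, V.character h * V.character (h⁻¹ * x)) • ρ x⁻¹ =
      ((Fintype.card G : ℂ) / V.character 1) • ∑ x : G, V.character x • ρ x⁻¹ := by
    simp only [FDRep.sum_char_mul_char_inv_mul, Finset.smul_sum, smul_smul]
  rw [charProj, smul_mul_smul_comm, sum_smul_mul_sum_smul, hS, smul_smul]
  congr 1
  field_simp

lemma charProj_mul_of_mem_invariants {A : Type*} [CommRing A] [Algebra ℂ A]
    (ρ : Representation ℂ G A)
    (hρ : ∀ g a b, ρ g (a * b) = ρ g a * ρ g b) (χ : G → ℂ) (x : A) {y : A}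
    (hy : y ∈ ρ.invariants) : ρ.charProj χ (x * y) = ρ.charProj χ x * y := by
  simp only [charProj_apply, hρ, (mem_invariants ρ y).mp hy, smul_mul_assoc, Finset.sum_mul]

end Representation

namespace MvPolynomial

open Representation

variable {ι R G : Type*} [CommRing R] [Group G]

noncomputable def leftPermRep (φ : G →* Equiv.Perm ι) :
    Representation R G (MvPolynomial (ι ⊕ ι) R) where
  toFun g := (rename (Sum.map (φ g) id)).toLinearMap
  map_one' := LinearMap.ext fun p => by simp
  map_mul' g h := LinearMap.ext fun p => by simp [rename_rename, Sum.map_comp_map]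

noncomputable def rightPermRep (φ : G →* Equiv.Perm ι) :
    Representation R G (MvPolynomial (ι ⊕ ι) R) where
  toFun g := (rename (Sum.map id (φ g))).toLinearMap
  map_one' := LinearMap.ext fun p => by simp
  map_mul' g h := LinearMap.ext fun p => by simp [rename_rename, Sum.map_comp_map]

variable (φ : G →* Equiv.Perm ι)

@[simp]
lemma leftPermRep_apply (g : G) (p : MvPolynomial (ι ⊕ ι) R) :
    leftPermRep φ g p = rename (Sum.map (φ g) id) p := rfl

@[simp]
lemma rightPermRep_apply (g : G) (p : MvPolynomial (ι ⊕ ι) R) :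
    rightPermRep φ g p = rename (Sum.map id (φ g)) p := rfl

lemma leftPermRep_apply_eq_rightPermRep_inv_apply {p : MvPolynomial (ι ⊕ ι) R}
    (hp : ∀ σ : Equiv.Perm ι, rename (Sum.map σ σ) p = p) (g : G) :
    leftPermRep φ g p = rightPermRep φ g⁻¹ p := by
  conv_rhs => rw [← hp (φ g)]
  simp [rename_rename, Sum.map_comp_map]

lemma leftPermRep_rightPermRep_comm (g h : G) (p : MvPolynomial (ι ⊕ ι) R) :
    leftPermRep φ g (rightPermRep φ h p) = rightPermRep φ h (leftPermRep φ g p) := by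
  simp [rename_rename, Sum.map_comp_map]

lemma prod_X_inr_pow_mem_invariants_leftPermRep [Fintype ι] (m : ι → ℕ) :
    ∏ i, X (R := R) (Sum.inr i) ^ m i ∈ (leftPermRep φ).invariants :=
  (mem_invariants _ _).mpr fun g => by simp

lemma prod_X_inl_pow_mem_invariants_rightPermRep [Fintype ι] (m : ι → ℕ) :
    ∏ i, X (R := R) (Sum.inl i) ^ m i ∈ (rightPermRep φ).invariants :=
  (mem_invariants _ _).mpr fun g => by simp

variable [Fintype G]

lemma charProj_rightPermRep_eq_of_invariant {p : MvPolynomial (ι ⊕ ι) ℂ}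
    (hp : ∀ σ : Equiv.Perm ι, rename (Sum.map σ σ) p = p) (χ : G → ℂ) :
    (rightPermRep φ).charProj (fun g => χ g⁻¹) p = (leftPermRep φ).charProj χ p := by
  simp only [charProj_apply, inv_one, leftPermRep_apply_eq_rightPermRep_inv_apply φ hp, inv_inv]
  congr 1
  exact Fintype.sum_equiv (Equiv.inv G) _ _ fun g => by simp

lemma charProj_rightPermRep_mem_invariants_leftPermRep (a : G → ℂ)
    {y : MvPolynomial (ι ⊕ ι) ℂ} (hy : y ∈ (leftPermRep φ).invariants) :
    (rightPermRep φ).charProj a y ∈ (leftPermRep φ).invariants := by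
  refine (mem_invariants _ _).mpr fun g => ?_
  simp only [charProj_apply, map_smul, map_sum, leftPermRep_rightPermRep_comm,
    (mem_invariants _ y).mp hy]

lemma charProj_leftPermRep_mul_charProj_rightPermRep (a b : G → ℂ)
    {x y : MvPolynomial (ι ⊕ ι) ℂ} (hx : x ∈ (rightPermRep φ).invariants)
    (hy : y ∈ (leftPermRep φ).invariants) :
    (leftPermRep φ).charProj a x * (rightPermRep φ).charProj b y =
      (leftPermRep φ).charProj a ((rightPermRep φ).charProj b (x * y)) := by
  rw [mul_comm x y, charProj_mul_of_mem_invariants _ (fun _ => map_mul (rename _)) _ _ hx,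
    mul_comm _ x, charProj_mul_of_mem_invariants _ (fun _ => map_mul (rename _)) _ _
      (charProj_rightPermRep_mem_invariants_leftPermRep φ b hy)]

end MvPolynomial

namespace PowerSeries

lemma coeff_prod_eq_sum_fin {ι A : Type*} [Fintype ι] [DecidableEq ι] [CommSemiring A]
    (F : ι → A⟦X⟧) (k : ℕ) :
    coeff k (∏ i, F i) =
      ∑ m : ι → Fin (k + 1), if ∑ i, (m i : ℕ) = k then ∏ i, coeff (m i) (F i) else 0 := by
  rw [coeff_prod, ← Finset.sum_filter]
  have hle : ∀ l ∈ Finset.finsuppAntidiag (Finset.univ : Finset ι) k, ∀ i, l i ≤ k :=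
    fun l hl i => (Finset.mem_finsuppAntidiag.mp hl).1 ▸
      Finset.single_le_sum (by simp) (Finset.mem_univ i)
  refine Finset.sum_bij' (fun l hl i => ⟨l i, Nat.lt_succ_of_le (hle l hl i)⟩)
    (fun m _ => Finsupp.equivFunOnFinite.symm fun i => (m i : ℕ)) ?_ ?_ ?_ ?_ ?_
  · intro l hl
    simpa using (Finset.mem_finsuppAntidiag.mp hl).1
  · intro m hm
    simpa [Finset.mem_finsuppAntidiag] using hm
  · intro l hl
    ext; simp
  · intro m hm
    ext; simp
  · intro l hl
    rfl

end PowerSeries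

namespace MvPolynomial

variable {ι R : Type*} [Fintype ι] [CommSemiring R]

/-- `∏ᵢ f(t uᵢ vᵢ)`, with `uᵢ = X (inl i)` and `vᵢ = X (inr i)`. -/
noncomputable def diagProdSeries (f : ℕ → R) : PowerSeries (MvPolynomial (ι ⊕ ι) R) :=
  ∏ i, PowerSeries.mk fun M => C (f M) * (X (Sum.inl i) * X (Sum.inr i)) ^ M

lemma rename_coeff_diagProdSeries (f : ℕ → R) (σ : Equiv.Perm ι) (k : ℕ) :
    rename (Sum.map σ σ) (PowerSeries.coeff k (diagProdSeries f)) =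
      PowerSeries.coeff k (diagProdSeries f) := by
  rw [← AlgHom.coe_toRingHom, ← PowerSeries.coeff_map, diagProdSeries, map_prod]
  congr 1
  refine Fintype.prod_equiv σ _ _ fun i => ?_
  ext M
  simp

lemma coeff_diagProdSeries [DecidableEq ι] (f : ℕ → R) (k : ℕ) :
    PowerSeries.coeff k (diagProdSeries f) =
      ∑ m : ι → Fin (k + 1), if ∑ i, (m i : ℕ) = k then
        (∏ i, f (m i)) • ((∏ i, X (Sum.inl i) ^ (m i : ℕ)) * ∏ i, X (Sum.inr i) ^ (m i : ℕ))
      else 0 := by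
  rw [diagProdSeries, PowerSeries.coeff_prod_eq_sum_fin]
  refine Finset.sum_congr rfl fun m _ => if_congr Iff.rfl ?_ rfl
  simp only [PowerSeries.coeff_mk, Finset.prod_mul_distrib, mul_pow, smul_eq_C_mul, map_prod]

end MvPolynomial

open MvPolynomial Representation in
theorem stmt3_general (n : ℕ) (G : Type) [Group G] [Fintype G]
    (φ : G →* Equiv.Perm (Fin n))
    (V : FDRep ℂ G) (hV : CategoryTheory.Simple V)
    (fc : ℕ → ℂ) (k : ℕ) :
    let χ : G → ℂ := V.character
    -- action of `e_χ` on the `u`-variables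
    let Eu : MvPolynomial (Fin n ⊕ Fin n) ℂ → MvPolynomial (Fin n ⊕ Fin n) ℂ :=
      fun p => (χ 1 / (Fintype.card G : ℂ)) •
        ∑ g : G, χ g • MvPolynomial.rename (Sum.map (⇑(φ g⁻¹)) id) p
    -- action of `e_χ̄` on the `v`-variables
    let Ev : MvPolynomial (Fin n ⊕ Fin n) ℂ → MvPolynomial (Fin n ⊕ Fin n) ℂ :=
      fun p => ((starRingEnd ℂ) (χ 1) / (Fintype.card G : ℂ)) •
        ∑ g : G, (starRingEnd ℂ) (χ g) • MvPolynomial.rename (Sum.map id (⇑(φ g⁻¹))) p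
    -- the product `∏_{i=1}^n f(t u_i v_i)` as a power series in `t`
    let P : PowerSeries (MvPolynomial (Fin n ⊕ Fin n) ℂ) :=
      ∏ i : Fin n, PowerSeries.mk fun M =>
        MvPolynomial.C (fc M) *
          (MvPolynomial.X (Sum.inl i) * MvPolynomial.X (Sum.inr i)) ^ M
    Eu ((PowerSeries.coeff k) P) = Ev ((PowerSeries.coeff k) P) ∧
    Eu ((PowerSeries.coeff k) P) =
      ∑ m : Fin n → Fin (k + 1),
        if (∑ i, (m i : ℕ)) = k then
          (∏ i : Fin n, fc (m i)) •
            (Eu (∏ i : Fin n, MvPolynomial.X (Sum.inl i) ^ (m i : ℕ)) *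
             Ev (∏ i : Fin n, MvPolynomial.X (Sum.inr i) ^ (m i : ℕ)))
        else 0 := by
  intro χ Eu Ev P
  have hEu : ∀ p, Eu p = (leftPermRep φ).charProj χ p := fun p => by
    simp only [Eu, charProj_apply, leftPermRep_apply]
  have hEv : ∀ p, Ev p = (rightPermRep φ).charProj (fun g => χ g⁻¹) p := fun p => by
    simp only [Ev, charProj_apply, rightPermRep_apply, χ, FDRep.char_inv]
  have hsymm : Ev (PowerSeries.coeff k P) = Eu (PowerSeries.coeff k P) := by
    rw [hEu, hEv]
    exact charProj_rightPermRep_eq_of_invariant φ (rename_coeff_diagProdSeries fc · k) χ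
  have hP : P = diagProdSeries fc := rfl
  refine ⟨hsymm.symm, ?_⟩
  simp only [hEu, hEv] at hsymm ⊢
  calc (leftPermRep φ).charProj χ (PowerSeries.coeff k P)
      = (leftPermRep φ).charProj χ ((leftPermRep φ).charProj χ (PowerSeries.coeff k P)) :=
        (LinearMap.congr_fun (charProj_mul_self _ V) _).symm
    _ = (leftPermRep φ).charProj χ
          ((rightPermRep φ).charProj (fun g => χ g⁻¹) (PowerSeries.coeff k P)) := by rw [hsymm]
    _ = _ := by
        rw [hP, coeff_diagProdSeries]
        simp only [map_sum, apply_ite, map_smul, map_zero,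
          charProj_leftPermRep_mul_charProj_rightPermRep φ _ _
            (prod_X_inl_pow_mem_invariants_rightPermRep φ _)
            (prod_X_inr_pow_mem_invariants_leftPermRep φ _)]

/-- The master bosonic immanant identity: for a finite group `G` embedded in `S_n`
(acting on the `u`-variables and on the `v`-variables by permutations), an irreducible
complex character `χ` of `G`, and a formal power series `f(t) = ∑ f_M t^M`, applying the
idempotent `e_χ = (χ(1)/|G|) ∑_g χ(g) g⁻¹` in the `u`-variables to `∏_i f(t u_i v_i)`
agrees with applying `e_χ̄` in the `v`-variables, and both equal
`∑_{m ∈ ℤ_{≥0}^n} t^{|m|} (∏_i f_{m_i}) (e_χ(u)(u^m)) (e_χ̄(v)(v^m))`,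
stated coefficient-wise in `t`. -/
theorem stmt3 (n : ℕ) (hn : 1 ≤ n) (G : Type) [Group G] [Fintype G]
    (φ : G →* Equiv.Perm (Fin n)) (hφ : Function.Injective φ)
    (V : FDRep ℂ G) (hV : CategoryTheory.Simple V)
    (fc : ℕ → ℂ) (k : ℕ) :
    let χ : G → ℂ := V.character
    -- action of `e_χ` on the `u`-variables
    let Eu : MvPolynomial (Fin n ⊕ Fin n) ℂ → MvPolynomial (Fin n ⊕ Fin n) ℂ :=
      fun p => (χ 1 / (Fintype.card G : ℂ)) •
        ∑ g : G, χ g • MvPolynomial.rename (Sum.map (⇑(φ g⁻¹)) id) p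
    -- action of `e_χ̄` on the `v`-variables
    let Ev : MvPolynomial (Fin n ⊕ Fin n) ℂ → MvPolynomial (Fin n ⊕ Fin n) ℂ :=
      fun p => ((starRingEnd ℂ) (χ 1) / (Fintype.card G : ℂ)) •
        ∑ g : G, (starRingEnd ℂ) (χ g) • MvPolynomial.rename (Sum.map id (⇑(φ g⁻¹))) p
    -- the product `∏_{i=1}^n f(t u_i v_i)` as a power series in `t`
    let P : PowerSeries (MvPolynomial (Fin n ⊕ Fin n) ℂ) :=
      ∏ i : Fin n, PowerSeries.mk fun M =>
        MvPolynomial.C (fc M) *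
          (MvPolynomial.X (Sum.inl i) * MvPolynomial.X (Sum.inr i)) ^ M
    Eu ((PowerSeries.coeff k) P) = Ev ((PowerSeries.coeff k) P) ∧
    Eu ((PowerSeries.coeff k) P) =
      ∑ m : Fin n → Fin (k + 1),
        if (∑ i, (m i : ℕ)) = k then
          (∏ i : Fin n, fc (m i)) •
            (Eu (∏ i : Fin n, MvPolynomial.X (Sum.inl i) ^ (m i : ℕ)) *
             Ev (∏ i : Fin n, MvPolynomial.X (Sum.inr i) ^ (m i : ℕ)))
        else 0 :=
  stmt3_general n G φ V hV fc k
end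

section
/- Let u_1,...,u_n, v_1,...,v_n be pairwise anticommuting odd variables in an exterior algebra over a commutative integral domain, with n ≥ 2. Then perm(f_0 + f_1 t u_i v_j)_{i,j=1}^n = n! f_0^n + (n−1)! f_0^{n−1} f_1 t (u_1 + ... + u_n)(v_1 + ... + v_n). -/
/-!
Expanding the ordered product `∏ᵢ (a + F i (σ i))` with `a` central gives a sum over sublists `s`
of `a ^ (n - |s|) * ∏_{k ∈ s} F k (σ k)`. For `|s| ≥ 2` with first entries `i, j`, the involution
`σ ↦ σ * swap i j` of `Sₙ` negates that term, since `u_i v_p u_j v_q = - u_i v_q u_j v_p` for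
anticommuting `u, v`; so only `|s| ≤ 1` survive, and `∑_σ F i (σ i) = (n - 1)! ∑_j F i j`.
-/

open Equiv Polynomial

namespace List

theorem prod_map_add_eq_sum_sublists' {ι S : Type*} [Ring S] (a : S) (g : ι → S)
    (ha : ∀ i, Commute a (g i)) (l : List ι) :
    (l.map fun i => a + g i).prod =
      (l.sublists'.map fun s => a ^ (l.length - s.length) * (s.map g).prod).sum := by
  induction l with
  | nil => simp
  | cons k l ih =>
    rw [map_cons, prod_cons, ih, sublists'_cons, map_append, sum_append, map_map, add_mul,
      ← sum_map_mul_left, ← sum_map_mul_left]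
    congr 1
    · refine congrArg _ (map_congr_left fun s hs => ?_)
      have hle : s.length ≤ l.length := (mem_sublists'.mp hs).length_le
      simp only [length_cons]
      rw [← mul_assoc, ← pow_succ', Nat.succ_sub hle]
    · refine congrArg _ (map_congr_left fun s _ => ?_)
      simp only [Function.comp_apply, length_cons, Nat.succ_sub_succ, map_cons, prod_cons]
      rw [← mul_assoc, ← mul_assoc, ((ha k).pow_left _).eq]

theorem sum_map_sublists'_eq_of_forall_two_le {ι M : Type*} [AddCommMonoid M] (l : List ι)
    (c : List ι → M) (hc : ∀ s, s.Sublist l → 2 ≤ s.length → c s = 0) :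
    (l.sublists'.map c).sum = c [] + (l.map fun i => c [i]).sum := by
  induction l generalizing c with
  | nil => simp
  | cons k l ih =>
    have hsub : ∀ s : List ι, s.Sublist l → s.Sublist (k :: l) := fun _ hs =>
      hs.trans (sublist_cons_self k l)
    have hcons := ih (fun s => c (k :: s)) fun s hs h2 =>
      hc _ (hs.cons_cons k) (h2.trans (Nat.le_succ _))
    have hpairs : (l.map fun i => c [k, i]).sum = 0 := sum_eq_zero <| by
      simpa using fun i hi => hc _ ((singleton_sublist.mpr hi).cons_cons k) le_rfl
    rw [sublists'_cons, map_append, sum_append, map_map, ih c fun s hs => hc s (hsub s hs),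
      Function.comp_def, hcons, hpairs, map_cons, sum_cons]
    abel

end List

theorem Finset.sum_comm_list {α β M : Type*} [AddCommMonoid M] (s : Finset α) (l : List β)
    (g : α → β → M) : ∑ a ∈ s, (l.map (g a)).sum = (l.map fun b => ∑ a ∈ s, g a b).sum := by
  induction l <;> simp_all [Finset.sum_add_distrib]

theorem Fin.sum_perm_apply {M : Type*} [AddCommMonoid M] {n : ℕ} (w : Fin n → M) (i : Fin n) :
    ∑ σ : Perm (Fin n), w (σ i) = (n - 1).factorial • ∑ j, w j := by
  obtain ⟨m, rfl⟩ : ∃ m, n = m + 1 := Nat.exists_eq_add_one_of_ne_zero i.pos.ne'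
  have hi : ∑ σ : Perm (Fin (m + 1)), w (σ i) = ∑ σ : Perm (Fin (m + 1)), w (σ 0) :=
    (Fintype.sum_equiv (Equiv.mulRight (swap i 0)) _ _ fun σ => by simp).symm
  rw [hi, ← Fintype.sum_equiv (Perm.decomposeFin (n := m)).symm (fun x => w x.1) _
    fun ⟨_, _⟩ => by simp, Fintype.sum_prod_type]
  simp [Finset.smul_sum, Fintype.card_perm]

theorem sum_perm_prod_map_eq_zero {ι S : Type*} [Fintype ι] [DecidableEq ι] [Ring S]
    (F : ι → ι → S) (hF : ∀ i j p q, i ≠ j → F i p * F j q + F i q * F j p = 0)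
    {l : List ι} (hl : l.Nodup) (h2 : 2 ≤ l.length) :
    ∑ σ : Perm ι, (l.map fun k => F k (σ k)).prod = 0 := by
  obtain _ | ⟨i, _ | ⟨j, rest⟩⟩ := l
  · simp at h2
  · simp at h2
  obtain ⟨⟨hij, hirest⟩, hjrest, -⟩ := by simpa using hl
  refine Finset.sum_ninvolution (· * swap i j) (fun σ => ?_) (fun σ _ => ?_)
    (fun _ => Finset.mem_univ _) (fun σ => by simp [mul_assoc])
  · have hrest : (rest.map fun k => F k ((σ * swap i j) k)) = rest.map fun k => F k (σ k) :=
      List.map_congr_left fun k hk => by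
        rw [Perm.mul_apply, swap_apply_of_ne_of_ne (by grind) (by grind)]
    simp only [List.map_cons, List.prod_cons, hrest]
    simp only [Perm.mul_apply, swap_apply_left, swap_apply_right, ← mul_assoc, ← add_mul,
      hF i j (σ i) (σ j) hij, zero_mul]
  · intro h
    exact hij (by simpa using (congrArg (· i) h).symm)

theorem sum_perm_prod_add_eq {S : Type*} [Ring S] {n : ℕ} (a : S) (F : Fin n → Fin n → S)
    (ha : ∀ i j, Commute a (F i j))
    (hF : ∀ i j p q, i ≠ j → F i p * F j q + F i q * F j p = 0) :
    ∑ σ : Perm (Fin n), ((List.finRange n).map fun i => a + F i (σ i)).prod =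
      n.factorial * a ^ n + (n - 1).factorial * a ^ (n - 1) * ∑ i, ∑ j, F i j := by
  set c : List (Fin n) → S := fun s =>
    a ^ (n - s.length) * ∑ σ : Perm (Fin n), (s.map fun k => F k (σ k)).prod
  have hc : ∀ s, s.Sublist (List.finRange n) → 2 ≤ s.length → c s = 0 := fun s hs h2 => by
    simp only [c, sum_perm_prod_map_eq_zero F hF (hs.nodup (List.nodup_finRange n)) h2, mul_zero]
  calc ∑ σ : Perm (Fin n), ((List.finRange n).map fun i => a + F i (σ i)).prod
      = ((List.finRange n).sublists'.map c).sum := by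
        simp only [List.prod_map_add_eq_sum_sublists' a _ (fun k => ha _ _), List.length_finRange,
          c, Finset.mul_sum]
        exact Finset.sum_comm_list _ _ _
    _ = c [] + ∑ i, c [i] := by
        rw [List.sum_map_sublists'_eq_of_forall_two_le _ c hc, Fin.sum_univ_def]
    _ = _ := by
        simp only [c, List.length_nil, List.length_singleton, List.map_nil, List.prod_nil,
          List.map_singleton, List.prod_singleton, Finset.sum_const, Finset.card_univ,
          Fintype.card_perm, Fintype.card_fin, Fin.sum_perm_apply]
        rw [Nat.sub_zero, nsmul_one, ← Nat.cast_comm, ← Finset.mul_sum, ← Finset.smul_sum,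
          mul_smul_comm, nsmul_eq_mul, mul_assoc]

theorem add_mul_swap_eq_zero_of_anticommute {S : Type*} [Ring S] {t x x' y y' : S}
    (ht : ∀ s, Commute t s) (hy : y * x' = -(x' * y)) (hy' : y' * x' = -(x' * y'))
    (hyy' : y' * y = -(y * y')) :
    t * x * y * (t * x' * y') + t * x * y' * (t * x' * y) = 0 := by
  have hswap : x * y * (x' * y') + x * y' * (x' * y) = 0 := by
    rw [mul_assoc x y, ← mul_assoc y, hy, mul_assoc x y', ← mul_assoc y', hy', neg_mul, neg_mul,
      mul_assoc x' y' y, hyy']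
    noncomm_ring
  calc t * x * y * (t * x' * y') + t * x * y' * (t * x' * y)
      = t * t * (x * y * (x' * y') + x * y' * (x' * y)) := by
        simp only [mul_assoc, mul_add, (ht _).left_comm]
    _ = 0 := by rw [hswap, mul_zero]

theorem stmt7_general (R : Type*) [CommRing R]
    (Λ : Type*) [Ring Λ] [Algebra R Λ] (n : ℕ)
    (u v : Fin n → Λ)
    (hv : ∀ i j, v i * v j = -(v j * v i))
    (huv : ∀ i j, u i * v j = -(v j * u i)) (f0 f1 : R) :
    (∑ σ : Equiv.Perm (Fin n),
      ((List.finRange n).map (fun i =>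
        Polynomial.C (algebraMap R Λ f0) +
        Polynomial.C (algebraMap R Λ f1) * Polynomial.X *
          Polynomial.C (u i) * Polynomial.C (v (σ i)))).prod) =
    (n.factorial : Polynomial Λ) * Polynomial.C (algebraMap R Λ (f0 ^ n)) +
    ((n - 1).factorial : Polynomial Λ) *
      Polynomial.C (algebraMap R Λ (f0 ^ (n - 1) * f1)) * Polynomial.X *
      Polynomial.C (∑ i : Fin n, u i) * Polynomial.C (∑ j : Fin n, v j) := by
  have hC : ∀ (r : R) (p : Λ[X]), Commute (C (algebraMap R Λ r)) p := fun r p => by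
    simpa only [Polynomial.algebraMap_apply] using Algebra.commute_algebraMap_left r p
  have hvu : ∀ i j, C (v j) * C (u i) = -(C (u i) * C (v j)) := fun i j => by
    rw [← C_mul, ← C_mul, ← C_neg, huv, neg_neg]
  have hvv : ∀ i j, C (v i) * C (v j) = -(C (v j) * C (v i)) := fun i j => by
    rw [← C_mul, ← C_mul, ← C_neg, hv]
  rw [sum_perm_prod_add_eq (C (algebraMap R Λ f0))
    (fun i j => C (algebraMap R Λ f1) * X * C (u i) * C (v j)) (fun _ _ => hC f0 _)
    fun _ j p q _ => add_mul_swap_eq_zero_of_anticommute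
      (fun s => (hC f1 s).mul_left (commute_X s)) (hvu j p) (hvu j q) (hvv q p)]
  simp only [← Finset.mul_sum, ← Finset.sum_mul, ← map_sum, map_pow, map_mul, mul_assoc]

/-- Fermionic permanent identity: for pairwise anticommuting odd variables
`u_1,…,u_n, v_1,…,v_n` (squaring to zero) over an integral domain,
`perm (f_0 + f_1 t u_i v_j) = n! f_0^n + (n-1)! f_0^{n-1} f_1 t (u_1+⋯+u_n)(v_1+⋯+v_n)`. -/
theorem stmt7 (R : Type*) [CommRing R] [IsDomain R]
    (Λ : Type*) [Ring Λ] [Algebra R Λ] (n : ℕ) (hn : 2 ≤ n)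
    (u v : Fin n → Λ)
    (hu : ∀ i j, u i * u j = -(u j * u i)) (hu2 : ∀ i, u i * u i = 0)
    (hv : ∀ i j, v i * v j = -(v j * v i)) (hv2 : ∀ i, v i * v i = 0)
    (huv : ∀ i j, u i * v j = -(v j * u i)) (f0 f1 : R) :
    (∑ σ : Equiv.Perm (Fin n),
      ((List.finRange n).map (fun i =>
        Polynomial.C (algebraMap R Λ f0) +
        Polynomial.C (algebraMap R Λ f1) * Polynomial.X *
          Polynomial.C (u i) * Polynomial.C (v (σ i)))).prod) =
    (n.factorial : Polynomial Λ) * Polynomial.C (algebraMap R Λ (f0 ^ n)) +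
    ((n - 1).factorial : Polynomial Λ) *
      Polynomial.C (algebraMap R Λ (f0 ^ (n - 1) * f1)) * Polynomial.X *
      Polynomial.C (∑ i : Fin n, u i) * Polynomial.C (∑ j : Fin n, v j) :=
  stmt7_general R Λ n u v hv huv f0 f1
end

section
/- Let u_1,...,u_n, v_1,...,v_n be pairwise anticommuting odd variables in an exterior algebra over a commutative integral domain, n ≥ 2, and t a central indeterminate. Then ∏_{i=1}^n ∏_{j=1}^n (1 + t u_i v_j) = 1 + t (u_1 + ... + u_n)(v_1 + ... + v_n), where the product is taken in lexicographic order of (i,j) (the factors 1 + t u_i v_j are even, hence commute, so the order is immaterial). -/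
section Aux

variable {Λ : Type*} [Ring Λ]

omit [Ring Λ] in
private lemma pairwise_of_all {α : Type*} {R : α → α → Prop} (h : ∀ a b, R a b) :
    ∀ l : List α, l.Pairwise R := by
  intro l; induction l with
  | nil => simp
  | cons a l ih => exact List.Pairwise.cons (fun b _ => h a b) ih

private lemma mul_list_sum_zero (x : Λ) (l : List Λ) (h : ∀ b ∈ l, x * b = 0) :
    x * l.sum = 0 := by
  induction l with
  | nil => simp
  | cons a l ih =>
    simp only [List.sum_cons, mul_add, h a (by simp),
      ih (fun b hb => h b (List.mem_cons_of_mem _ hb)), add_zero]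

/-- Key lemma: product of `1 + X * C aₖ` when all pairwise products vanish. -/
private lemma prod_one_add (l : List Λ)
    (h : l.Pairwise fun a b => a * b = 0) :
    (l.map fun a => 1 + Polynomial.X * Polynomial.C a).prod =
      1 + Polynomial.X * Polynomial.C l.sum := by
  induction l with
  | nil => simp
  | cons a l ih =>
    rcases List.pairwise_cons.mp h with ⟨ha, hl⟩
    rw [List.map_cons, List.prod_cons, ih hl, List.sum_cons]
    have hz : a * l.sum = 0 := mul_list_sum_zero a l ha
    have hx : Polynomial.C a * Polynomial.X = Polynomial.X * Polynomial.C a :=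
      Polynomial.X_mul.symm
    have : (Polynomial.X * Polynomial.C a) * (Polynomial.X * Polynomial.C l.sum) = 0 := by
      rw [mul_assoc, ← mul_assoc (Polynomial.C a), hx, mul_assoc, ← Polynomial.C_mul, hz,
        map_zero, mul_zero, mul_zero]
    rw [add_mul, one_mul, mul_add, mul_one, this, add_zero, map_add, mul_add]
    abel

private lemma anticomm_sum (x : Λ) (l : List Λ) (h : ∀ b ∈ l, x * b = -(b * x)) :
    x * l.sum = -(l.sum * x) := by
  induction l with
  | nil => simp
  | cons a l ih =>
    simp only [List.sum_cons, mul_add, add_mul, h a (by simp),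
      ih (fun b hb => h b (List.mem_cons_of_mem _ hb)), neg_add]

private lemma sum_sq_zero (l : List Λ) (h : ∀ a ∈ l, ∀ b ∈ l, a * b = -(b * a))
    (h2 : ∀ a ∈ l, a * a = 0) : l.sum * l.sum = 0 := by
  induction l with
  | nil => simp
  | cons a l ih =>
    have hmem : ∀ b ∈ l, b ∈ a :: l := fun b hb => List.mem_cons_of_mem _ hb
    have has : a * l.sum = -(l.sum * a) :=
      anticomm_sum a l (fun b hb => h a (by simp) b (hmem b hb))
    have hsa : l.sum * a = -(a * l.sum) := by rw [has, neg_neg]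
    have ihl : l.sum * l.sum = 0 :=
      ih (fun x hx y hy => h x (hmem x hx) y (hmem y hy)) (fun x hx => h2 x (hmem x hx))
    rw [List.sum_cons, add_mul, mul_add, mul_add, h2 a (by simp), ihl, hsa]
    abel

end Aux

/-- Fermionic Cauchy product identity: for pairwise anticommuting odd variables
`u_1,…,u_n, v_1,…,v_n` (squaring to zero) over an integral domain,
`∏_{i=1}^n ∏_{j=1}^n (1 + t u_i v_j) = 1 + t (u_1+⋯+u_n)(v_1+⋯+v_n)`,
the double product taken in lexicographic order of `(i,j)`. -/
theorem stmt8 (R : Type*) [CommRing R] [IsDomain R]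
    (Λ : Type*) [Ring Λ] [Algebra R Λ] (n : ℕ) (hn : 2 ≤ n)
    (u v : Fin n → Λ)
    (hu : ∀ i j, u i * u j = -(u j * u i)) (hu2 : ∀ i, u i * u i = 0)
    (hv : ∀ i j, v i * v j = -(v j * v i)) (hv2 : ∀ i, v i * v i = 0)
    (huv : ∀ i j, u i * v j = -(v j * u i)) :
    ((List.finRange n).map (fun i =>
      ((List.finRange n).map (fun j =>
        1 + Polynomial.X * Polynomial.C (u i) * Polynomial.C (v j))).prod)).prod =
    1 + Polynomial.X * Polynomial.C (∑ i : Fin n, u i) * Polynomial.C (∑ j : Fin n, v j) := by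
  set Sv : Λ := ∑ j : Fin n, v j with hSv
  set Su : Λ := ∑ i : Fin n, u i with hSu
  -- v's anticommute with Sv, u's anticommute with Sv
  have hvSv : ∀ j, v j * Sv = -(Sv * v j) := by
    intro j
    rw [hSv, Fin.sum_univ_def]
    exact anticomm_sum _ _ (by intro b hb; rcases List.mem_map.mp hb with ⟨k, _, rfl⟩; exact hv j k)
  have huSv : ∀ i, u i * Sv = -(Sv * u i) := by
    intro i
    rw [hSv, Fin.sum_univ_def]
    exact anticomm_sum _ _ (by intro b hb; rcases List.mem_map.mp hb with ⟨k, _, rfl⟩; exact huv i k)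
  -- Sv squares to zero
  have hSv2 : Sv * Sv = 0 := by
    rw [hSv, Fin.sum_univ_def]
    refine sum_sq_zero _ ?_ ?_
    · intro a ha b hb
      rcases List.mem_map.mp ha with ⟨j, _, rfl⟩
      rcases List.mem_map.mp hb with ⟨k, _, rfl⟩
      exact hv j k
    · intro a ha
      rcases List.mem_map.mp ha with ⟨j, _, rfl⟩
      exact hv2 j
  -- Step 1: inner products collapse
  have inner : ∀ i : Fin n,
      ((List.finRange n).map (fun j =>
        1 + Polynomial.X * Polynomial.C (u i) * Polynomial.C (v j))).prod =
      1 + Polynomial.X * Polynomial.C (u i * Sv) := by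
    intro i
    have hform : (fun j : Fin n =>
        1 + Polynomial.X * Polynomial.C (u i) * Polynomial.C (v j)) =
        fun j => 1 + Polynomial.X * Polynomial.C (u i * v j) := by
      funext j; rw [map_mul, mul_assoc]
    have key := prod_one_add ((List.finRange n).map fun j => u i * v j) ?_
    · rw [List.map_map] at key
      rw [hform]
      rw [show ((fun a => 1 + Polynomial.X * Polynomial.C a) ∘ fun j => u i * v j)
          = fun j => 1 + Polynomial.X * Polynomial.C (u i * v j) from rfl] at key
      rw [key]
      congr 1
      rw [List.sum_map_mul_left, ← Fin.sum_univ_def]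
    · refine (List.pairwise_map).mpr (pairwise_of_all ?_ _)
      intro j k
      have h1 : v j * u i = -(u i * v j) := by rw [huv i j, neg_neg]
      calc u i * v j * (u i * v k) = u i * (v j * u i) * v k := by
            rw [mul_assoc, mul_assoc, mul_assoc]
        _ = u i * -(u i * v j) * v k := by rw [h1]
        _ = -(u i * u i * (v j * v k)) := by
            simp [mul_neg, neg_mul, mul_assoc]
        _ = 0 := by rw [hu2 i, zero_mul, neg_zero]
  -- Step 2: outer product collapses
  calc ((List.finRange n).map (fun i =>
        ((List.finRange n).map (fun j =>
          1 + Polynomial.X * Polynomial.C (u i) * Polynomial.C (v j))).prod)).prod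
      = ((List.finRange n).map (fun i =>
          1 + Polynomial.X * Polynomial.C (u i * Sv))).prod := by
        congr 1; exact List.map_congr_left (fun i _ => inner i)
    _ = 1 + Polynomial.X * Polynomial.C Su * Polynomial.C Sv := by
        have key := prod_one_add ((List.finRange n).map fun i => u i * Sv) ?_
        · rw [List.map_map] at key
          rw [show ((fun a => 1 + Polynomial.X * Polynomial.C a) ∘ fun i => u i * Sv)
              = fun i => 1 + Polynomial.X * Polynomial.C (u i * Sv) from rfl] at key
          rw [key, List.sum_map_mul_right, ← Fin.sum_univ_def, ← hSu, map_mul, mul_assoc]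
        · refine (List.pairwise_map).mpr (pairwise_of_all ?_ _)
          intro i k
          have h1 : Sv * u k = -(u k * Sv) := by rw [huSv k, neg_neg]
          calc u i * Sv * (u k * Sv) = u i * (Sv * u k) * Sv := by
                rw [mul_assoc, mul_assoc, mul_assoc]
            _ = u i * -(u k * Sv) * Sv := by rw [h1]
            _ = -(u i * u k * (Sv * Sv)) := by
                simp [mul_neg, neg_mul, mul_assoc]
            _ = 0 := by rw [hSv2, mul_zero, neg_zero]
end

section
/- ε-deformed fermionic determinant identity: let u_1,...,u_n be pairwise anticommuting, v_1,...,v_n pairwise anticommuting, with ε u_i v_j = v_j u_i for all i,j for a central indeterminate ε, and all squares u_i^2 = v_j^2 = 0. Then det(f_0 + f_1 t u_i v_j)_{i,j=1}^n = ε^{C(n,2)} t^n n! f_1^n u_1···u_n v_1···v_n + ε^{C(n−1,2)} t^{n−1} (n−1)! f_0 f_1^{n−1} (Σ_i (−1)^{i−1} u_1···û_i···u_n)(Σ_j (−1)^{j−1} v_1···v̂_j···v_n). -/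
/-!
The products `u i * v j` commute pairwise and with the central scalars, so together with them
they generate a commutative subring, in which the left-hand side is the determinant of the matrix
`(f0 + f1 t u_i v_j)`. Adding the constant `f0` to every entry adds `f0` times the sum of all
cofactors, because any two rows of a constant matrix are equal. The determinant of `(u_i v_j)` and
of each of its minors is a sum over permutations whose terms all agree: moving every `u` to the
left past the `v`s costs `ε ^ (m.choose 2)`, and sorting the `v`s costs `sign σ`, which cancels
the sign of the term. So each of these determinants is `m! ε ^ (m.choose 2)` times the product of
the `u`s and the `v`s involved, and the cofactor sum factors into the two alternating sums.
-/

open Equiv Finset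

section Anticommuting

variable {Λ : Type*} [Ring Λ]

theorem prod_ofFn_swap_castSucc_succ_eq_neg {m : ℕ} (w : Fin (m + 1) → Λ)
    (hw : ∀ i j, w i * w j = -(w j * w i)) (i : Fin m) :
    (List.ofFn fun k => w (swap i.castSucc i.succ k)).prod = -(List.ofFn w).prod := by
  induction m with
  | zero => exact i.elim0
  | succ m ih =>
    cases i using Fin.cases with
    | zero =>
      have hrest (j : Fin m) : swap (0 : Fin (m + 2)) 1 j.succ.succ = j.succ.succ :=
        swap_apply_of_ne_of_ne (Fin.succ_ne_zero _) (Fin.succ_succ_ne_one j)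
      simp [List.ofFn_succ, hrest, ← mul_assoc, hw 1 0]
    | succ i =>
      have hhead : swap i.succ.castSucc i.succ.succ 0 = 0 :=
        swap_apply_of_ne_of_ne (Fin.castSucc_ne_zero_iff.mpr (Fin.succ_ne_zero _)).symm
          (Fin.succ_ne_zero _).symm
      have htail (j : Fin (m + 1)) :
          swap i.succ.castSucc i.succ.succ j.succ = (swap i.castSucc i.succ j).succ := by
        rw [← Fin.succ_castSucc, (Fin.succ_injective _).swap_apply]
      have := ih (fun j => w j.succ) (fun _ _ => hw _ _) i
      simp only [List.ofFn_succ, hhead, htail, List.prod_cons] at this ⊢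
      rw [this, mul_neg]

theorem prod_ofFn_perm_eq_sign_smul {m : ℕ} (w : Fin m → Λ)
    (hw : ∀ i j, w i * w j = -(w j * w i)) (σ : Perm (Fin m)) :
    (List.ofFn fun i => w (σ i)).prod = (Perm.sign σ : ℤ) • (List.ofFn w).prod := by
  cases m with
  | zero => simp [Subsingleton.elim σ 1]
  | succ m =>
    induction σ using Submonoid.induction_of_closure_eq_top_right
      (Perm.mclosure_swap_castSucc_succ m) with
    | one => simp
    | mul_right σ τ hτ ih =>
      obtain ⟨i, rfl⟩ := hτ
      simp only [Perm.coe_mul, Function.comp_apply]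
      rw [prod_ofFn_swap_castSucc_succ_eq_neg (fun k => w (σ k)) (fun _ _ => hw _ _) i, ih,
        Perm.sign_mul, Perm.sign_swap (Fin.castSucc_lt_succ (i := i)).ne]
      simp

theorem commute_mul_mul_of_anticommute {ε a a' b b' : Λ} (hε : ∀ x, Commute ε x)
    (ha : a * a' = -(a' * a)) (hb : b * b' = -(b' * b))
    (hba' : b * a' = ε * (a' * b)) (hb'a : b' * a = ε * (a * b')) :
    Commute (a * b) (a' * b') := by
  have h₁ : a * b * (a' * b') = ε * (a * a' * (b * b')) := by
    rw [mul_assoc, ← mul_assoc b, hba', mul_assoc ε, ← mul_assoc a ε, ← (hε a).eq]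
    simp only [mul_assoc]
  have h₂ : a' * b' * (a * b) = ε * (a' * a * (b' * b)) := by
    rw [mul_assoc, ← mul_assoc b', hb'a, mul_assoc ε, ← mul_assoc a' ε, ← (hε a').eq]
    simp only [mul_assoc]
  rw [Commute, SemiconjBy, h₁, h₂, ha, hb, neg_mul_neg]

end Anticommuting

section Reordering

variable {M : Type*} [Monoid M] {q : M}

theorem mul_prod_ofFn_eq_pow_mul (hq : ∀ x, Commute q x) (b : M) :
    ∀ {m : ℕ} (a : Fin m → M), (∀ i, b * a i = q * (a i * b)) →
      b * (List.ofFn a).prod = q ^ m * ((List.ofFn a).prod * b)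
  | 0, _, _ => by simp
  | m + 1, a, h => by
    have hc (x c : M) : x * (q ^ m * c) = q ^ m * (x * c) := ((hq x).pow_left m).symm.left_comm c
    rw [List.ofFn_succ, List.prod_cons, ← mul_assoc, h, mul_assoc, mul_assoc,
      mul_prod_ofFn_eq_pow_mul hq b _ fun i => h i.succ, hc, ← mul_assoc, ← pow_succ']
    simp only [mul_assoc]

theorem prod_ofFn_mul_eq_pow_choose_mul (hq : ∀ x, Commute q x) :
    ∀ {m : ℕ} (a b : Fin m → M), (∀ i j, b j * a i = q * (a i * b j)) →
      (List.ofFn fun i => a i * b i).prod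
        = q ^ m.choose 2 * ((List.ofFn a).prod * (List.ofFn b).prod)
  | 0, _, _, _ => by simp
  | m + 1, a, b, h => by
    have hc (k : ℕ) (x c : M) : x * (q ^ k * c) = q ^ k * (x * c) :=
      ((hq x).pow_left k).symm.left_comm c
    simp only [List.ofFn_succ, List.prod_cons, mul_assoc,
      prod_ofFn_mul_eq_pow_choose_mul hq _ _ fun i j => h i.succ j.succ, hc]
    rw [← mul_assoc (b 0), mul_prod_ofFn_eq_pow_mul hq (b 0) _ fun i => h i.succ 0,
      mul_assoc (q ^ m), hc, ← mul_assoc, ← pow_add, Nat.choose_succ_succ' m 1,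
      Nat.choose_one_right, add_comm m (m.choose 2)]
    simp only [mul_assoc]

end Reordering

theorem sum_sign_smul_prod_ofFn_mul_perm {Λ : Type*} [Ring Λ] {q : Λ}
    (hq : ∀ x, Commute q x) {m : ℕ} (a b : Fin m → Λ) (hb : ∀ i j, b i * b j = -(b j * b i))
    (hab : ∀ i j, b j * a i = q * (a i * b j)) :
    ∑ σ : Perm (Fin m), (Perm.sign σ : ℤ) • (List.ofFn fun i => a i * b (σ i)).prod
      = m.factorial • (q ^ m.choose 2 * ((List.ofFn a).prod * (List.ofFn b).prod)) := by
  have hterm (σ : Perm (Fin m)) : (Perm.sign σ : ℤ) • (List.ofFn fun i => a i * b (σ i)).prod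
      = q ^ m.choose 2 * ((List.ofFn a).prod * (List.ofFn b).prod) := by
    rw [prod_ofFn_mul_eq_pow_choose_mul hq a (fun j => b (σ j)) fun i j => hab i (σ j),
      prod_ofFn_perm_eq_sign_smul b hb, mul_smul_comm, mul_smul_comm, smul_smul,
      ← Units.val_mul, Int.units_mul_self, Units.val_one, one_smul]
  simp [hterm, Finset.card_univ, Fintype.card_perm]

namespace Matrix

variable {R : Type*} [CommRing R]

theorem det_add_replicateRow {n : Type*} [Fintype n] [DecidableEq n] (M : Matrix n n R)
    (r : n → R) : det (M + replicateRow n r) = det M + ∑ i, det (M.updateRow i r) := by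
  set rows : n → n → R := fun i => M i
  have hexpand : det (M + replicateRow n r) =
      ∑ s : Finset n, det (of (s.piecewise rows fun _ => r)) :=
    (detRowAlternating : (n → R) [⋀^n]→ₗ[R] R).toMultilinearMap.map_add_univ rows fun _ => r
  have hvanish : ∀ s ∈ univ, s ∉ insert univ (univ.image fun i => univ.erase i) →
      det (of (s.piecewise rows fun _ => r)) = 0 := by
    intro s _ hs
    simp only [mem_insert, mem_image, mem_univ, true_and, not_or, not_exists] at hs
    obtain ⟨i, hi⟩ := not_forall.mp (mt eq_univ_iff_forall.mpr hs.1)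
    obtain ⟨j, hj, hjs⟩ := exists_of_ssubset
      (lt_of_le_of_ne (subset_erase.mpr ⟨subset_univ s, hi⟩) (Ne.symm (hs.2 i)))
    exact det_zero_of_row_eq (ne_of_mem_erase hj)
      (show s.piecewise rows (fun _ => r) j = s.piecewise rows (fun _ => r) i by
        rw [piecewise_eq_of_notMem _ _ _ hi, piecewise_eq_of_notMem _ _ _ hjs])
  rw [hexpand, ← sum_subset (subset_univ _) hvanish, sum_insert, sum_image]
  · simp only [piecewise_univ, piecewise_erase_univ]
    rfl
  · intro i _ j _ hij
    simpa using congrArg (i ∈ ·) hij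
  · simp

theorem det_of_const_add {k : ℕ} (M : Matrix (Fin (k + 1)) (Fin (k + 1)) R) (b : R) :
    det (of (fun _ _ => b) + M) = det M + b * ∑ i : Fin (k + 1), ∑ j : Fin (k + 1),
      (-1) ^ (i + j : ℕ) * det (M.submatrix i.succAbove j.succAbove) := by
  rw [add_comm (of _) M, show of (fun _ _ => b) = replicateRow (Fin (k + 1)) fun _ => b from rfl,
    det_add_replicateRow, mul_sum]
  congr 1
  refine sum_congr rfl fun i _ => ?_
  rw [det_succ_row _ i, mul_sum]
  refine sum_congr rfl fun j _ => ?_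
  rw [updateRow_self, submatrix_updateRow_succAbove]
  ring

end Matrix

section CommutativeModel

variable {Λ : Type*} [Ring Λ] {R : Type*} [CommRing R] (φ : R →+* Λ)

theorem RingHom.map_det_eq_sum_sign_smul_prod_ofFn {m : ℕ} (M : Matrix (Fin m) (Fin m) R) :
    φ M.det = ∑ σ : Perm (Fin m), (Perm.sign σ : ℤ) • (List.ofFn fun i => φ (M i (σ i))).prod := by
  rw [← Matrix.det_transpose, Matrix.det_apply, map_sum]
  refine sum_congr rfl fun σ _ => ?_
  rw [Units.smul_def, map_zsmul, ← List.prod_ofFn, map_list_prod, List.map_ofFn]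
  rfl

theorem RingHom.map_det_of_map_apply_eq_mul {e : R} (he : ∀ x, Commute (φ e) x) {m : ℕ}
    (a b : Fin m → Λ) (hb : ∀ i j, b i * b j = -(b j * b i))
    (hab : ∀ i j, b j * a i = φ e * (a i * b j))
    (X : Matrix (Fin m) (Fin m) R) (hX : ∀ i j, φ (X i j) = a i * b j) :
    φ X.det = φ (m.factorial * e ^ m.choose 2) * ((List.ofFn a).prod * (List.ofFn b).prod) := by
  simp only [φ.map_det_eq_sum_sign_smul_prod_ofFn, hX]
  rw [sum_sign_smul_prod_ofFn_mul_perm he a b hb hab, nsmul_eq_mul, ← mul_assoc, map_mul,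
    map_natCast, map_pow]

open Matrix in
theorem RingHom.map_det_const_add_smul {k : ℕ} {e : R} (he : ∀ x, Commute (φ e) x) (b c : R)
    (u v : Fin (k + 1) → Λ) (hv : ∀ i j, v i * v j = -(v j * v i))
    (huv : ∀ i j, v j * u i = φ e * (u i * v j))
    (X : Matrix (Fin (k + 1)) (Fin (k + 1)) R) (hX : ∀ i j, φ (X i j) = u i * v j) :
    φ (det (of (fun _ _ => b) + c • X)) =
      φ (e ^ (k + 1).choose 2 * c ^ (k + 1) * (k + 1).factorial) *
        ((List.ofFn u).prod * (List.ofFn v).prod) +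
      φ (e ^ k.choose 2 * c ^ k * k.factorial * b) *
        (∑ i : Fin (k + 1), (-1) ^ (i : ℕ) * (List.ofFn fun a => u (i.succAbove a)).prod) *
        (∑ j : Fin (k + 1), (-1) ^ (j : ℕ) * (List.ofFn fun a => v (j.succAbove a)).prod) := by
  have hminor (i j : Fin (k + 1)) := φ.map_det_of_map_apply_eq_mul he (fun a => u (i.succAbove a))
    (fun a => v (j.succAbove a)) (fun _ _ => hv _ _) (fun _ _ => huv _ _)
    (X.submatrix i.succAbove j.succAbove) fun _ _ => hX _ _
  have hsign (i j : Fin (k + 1)) (x y : Λ) :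
      (-1) ^ (i : ℕ) * x * ((-1) ^ (j : ℕ) * y) = φ ((-1) ^ (i + j : ℕ)) * (x * y) := by
    rw [map_pow, map_neg, map_one, pow_add, mul_assoc, ← mul_assoc x,
      ← ((Commute.neg_one_left x).pow_left _).eq]
    simp only [mul_assoc]
  rw [det_of_const_add, map_add]
  congr 1
  · rw [det_smul, Fintype.card_fin, map_mul, φ.map_det_of_map_apply_eq_mul he u v hv huv X hX,
      ← mul_assoc, ← map_mul]
    congr 2
    ring
  · rw [map_mul, map_sum, mul_sum, mul_assoc, sum_mul_sum, mul_sum]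
    refine sum_congr rfl fun i _ => ?_
    rw [map_sum, mul_sum, mul_sum]
    refine sum_congr rfl fun j _ => ?_
    rw [hsign, show (c • X).submatrix i.succAbove j.succAbove =
      c • X.submatrix i.succAbove j.succAbove from rfl, det_smul, Fintype.card_fin, map_mul, map_mul, hminor]
    simp only [← mul_assoc, ← map_mul]
    congr 3
    ring

end CommutativeModel

universe u in
open scoped IsMulCommutative in
theorem exists_commRing_ringHom_of_pairwise_commute {Λ : Type u} [Ring Λ] {s : Set Λ}
    (hs : ∀ x ∈ s, ∀ y ∈ s, Commute x y) :
    ∃ (R : Type u) (_ : CommRing R) (φ : R →+* Λ), s ⊆ Set.range φ := by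
  have : IsMulCommutative (Subring.closure s) := Subring.isMulCommutative_closure hs
  exact ⟨Subring.closure s, inferInstance, (Subring.closure s).subtype,
    fun x hx => ⟨⟨x, Subring.subset_closure hx⟩, rfl⟩⟩

theorem Fin.sort_univ_erase {k : ℕ} (p : Fin (k + 1)) :
    (univ.erase p).sort (· ≤ ·) = List.ofFn p.succAbove :=
  (univ.erase p).sortedLT_sort.eq_of_mem_iff
    (List.sortedLT_ofFn_iff.mpr (Fin.strictMono_succAbove p)) fun a => by
      simp only [mem_sort, mem_erase, mem_univ, and_true, List.mem_ofFn,
        Fin.exists_succAbove_eq_iff]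

theorem stmt17_general (Λ : Type*) [Ring Λ] (n : ℕ)
    (ε t f0 f1 : Λ)
    (hε : ∀ x : Λ, ε * x = x * ε) (ht : ∀ x : Λ, t * x = x * t)
    (hf0 : ∀ x : Λ, f0 * x = x * f0) (hf1 : ∀ x : Λ, f1 * x = x * f1)
    (u v : Fin n → Λ)
    (hu : ∀ i j, u i * u j = -(u j * u i))
    (hv : ∀ i j, v i * v j = -(v j * v i))
    (huv : ∀ i j, v j * u i = ε * (u i * v j)) :
    (∑ σ : Equiv.Perm (Fin n), (Equiv.Perm.sign σ : ℤ) •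
      ((List.finRange n).map (fun i => f0 + f1 * t * u i * v (σ i))).prod) =
    ε ^ (n.choose 2) * t ^ n * (n.factorial : Λ) * f1 ^ n *
      ((List.finRange n).map u).prod * ((List.finRange n).map v).prod +
    ε ^ ((n - 1).choose 2) * t ^ (n - 1) * ((n - 1).factorial : Λ) * f0 * f1 ^ (n - 1) *
      (∑ i : Fin n, (-1 : Λ) ^ (i : ℕ) *
        ((((Finset.univ : Finset (Fin n)).erase i).sort (· ≤ ·)).map u).prod) *
      (∑ j : Fin n, (-1 : Λ) ^ (j : ℕ) *
        ((((Finset.univ : Finset (Fin n)).erase j).sort (· ≤ ·)).map v).prod) := by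
  rcases n with _ | k
  · simp
  have hcentral : ∀ z ∈ ({ε, t, f0, f1} : Set Λ), ∀ x, Commute z x := by
    simp only [Set.mem_insert_iff, Set.mem_singleton_iff]
    rintro z (rfl | rfl | rfl | rfl)
    exacts [hε, ht, hf0, hf1]
  obtain ⟨R, _, φ, hφ⟩ := exists_commRing_ringHom_of_pairwise_commute
    (s := {ε, t, f0, f1} ∪ Set.range fun p : Fin (k + 1) × Fin (k + 1) => u p.1 * v p.2) <| by
      rintro x (hx | ⟨⟨i, j⟩, rfl⟩) y (hy | ⟨⟨p, q⟩, rfl⟩)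
      · exact hcentral x hx y
      · exact hcentral x hx _
      · exact (hcentral y hy _).symm
      · exact commute_mul_mul_of_anticommute hε (hu i p) (hv j q) (huv p j) (huv i q)
  have hrange : ∀ z ∈ ({ε, t, f0, f1} : Set Λ), z ∈ Set.range φ := fun z hz => hφ (Or.inl hz)
  obtain ⟨e, rfl⟩ := hrange ε (by simp)
  obtain ⟨τ, rfl⟩ := hrange t (by simp)
  obtain ⟨b, rfl⟩ := hrange f0 (by simp)
  obtain ⟨c, rfl⟩ := hrange f1 (by simp)
  choose X hX using fun i j => (hφ (Or.inr ⟨(i, j), rfl⟩) : u i * v j ∈ Set.range φ)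
  have hdet := φ.map_det_const_add_smul hε b (c * τ) u v hv huv (Matrix.of X) hX
  rw [φ.map_det_eq_sum_sign_smul_prod_ofFn] at hdet
  simp only [Matrix.add_apply, Matrix.smul_apply, Matrix.of_apply, smul_eq_mul, map_add, map_mul,
    hX, ← mul_assoc] at hdet
  simp only [← List.ofFn_eq_map, hdet, Fin.sort_univ_erase, List.map_ofFn, Function.comp_def,
    Nat.add_sub_cancel]
  simp only [← map_pow, ← map_natCast φ, ← map_mul]
  congr 4 <;> ring

/-- ε-deformed fermionic determinant identity: `u_1,…,u_n` pairwise anticommute,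
`v_1,…,v_n` pairwise anticommute, all squares vanish, `v_j u_i = ε u_i v_j` for central
(bookkeeping) indeterminates `ε, t`, and central scalars `f_0, f_1`. Then
`det (f_0 + f_1 t u_i v_j) = ε^{C(n,2)} t^n n! f_1^n u_1⋯u_n v_1⋯v_n
 + ε^{C(n-1,2)} t^{n-1} (n-1)! f_0 f_1^{n-1}
   (∑_i (-1)^{i-1} u_1⋯û_i⋯u_n)(∑_j (-1)^{j-1} v_1⋯v̂_j⋯v_n)`. -/
theorem stmt17 (Λ : Type*) [Ring Λ] (h2 : (2 : Λ) ≠ 0) (n : ℕ) (hn : 2 ≤ n)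
    (ε t f0 f1 : Λ)
    (hε : ∀ x : Λ, ε * x = x * ε) (ht : ∀ x : Λ, t * x = x * t)
    (hf0 : ∀ x : Λ, f0 * x = x * f0) (hf1 : ∀ x : Λ, f1 * x = x * f1)
    (u v : Fin n → Λ)
    (hu : ∀ i j, u i * u j = -(u j * u i)) (hu2 : ∀ i, u i * u i = 0)
    (hv : ∀ i j, v i * v j = -(v j * v i)) (hv2 : ∀ i, v i * v i = 0)
    (huv : ∀ i j, v j * u i = ε * (u i * v j)) :
    (∑ σ : Equiv.Perm (Fin n), (Equiv.Perm.sign σ : ℤ) •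
      ((List.finRange n).map (fun i => f0 + f1 * t * u i * v (σ i))).prod) =
    ε ^ (n.choose 2) * t ^ n * (n.factorial : Λ) * f1 ^ n *
      ((List.finRange n).map u).prod * ((List.finRange n).map v).prod +
    ε ^ ((n - 1).choose 2) * t ^ (n - 1) * ((n - 1).factorial : Λ) * f0 * f1 ^ (n - 1) *
      (∑ i : Fin n, (-1 : Λ) ^ (i : ℕ) *
        ((((Finset.univ : Finset (Fin n)).erase i).sort (· ≤ ·)).map u).prod) *
      (∑ j : Fin n, (-1 : Λ) ^ (j : ℕ) *
        ((((Finset.univ : Finset (Fin n)).erase j).sort (· ≤ ·)).map v).prod) :=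
  stmt17_general Λ n ε t f0 f1 hε ht hf0 hf1 u v hu hv huv
end
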